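/- arXiv:0901.2432 — 10 statements merged into one kernel-verified Lean document; each statement's English description precedes it below -/
import Mathlib

section
/- For every real number θ such that θ/π is not an integer, the symmetric partial sums ∑_{j=-N}^{N} 2/(θ + 2jπ) converge as N → ∞, and their limit equals (cos θ + 1)/sin θ. -/
open Real Filter Topology

open Complex in
lemma aux_coeff (α : ℝ) (hα : ∀ n : ℤ, α ≠ n) (n : ℤ) :
    fourierCoeffOn (zero_lt_one' ℝ) (fun x => ((Real.cos (2*π*α*(x-1/2)) : ℝ) : ℂ)) n
      = ((α * Real.sin (π*α) / (π*(α^2 - n^2)) : ℝ) : ℂ) := by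
  rw [fourierCoeffOn_eq_integral]
  have hπ : (π:ℝ) ≠ 0 := Real.pi_ne_zero
  have h1 : ((α:ℂ) - n) ≠ 0 := by
    rw [sub_ne_zero]; exact_mod_cast hα n
  have h2 : ((α:ℂ) + n) ≠ 0 := by
    have hne : α ≠ ((-n : ℤ) : ℝ) := hα (-n)
    intro hc
    apply hne
    push_cast at hc ⊢
    have : (α:ℂ) = -(n:ℂ) := by linear_combination hc
    exact_mod_cast this
  have hπC : (π:ℂ) ≠ 0 := by exact_mod_cast hπ
  have c1 : (2*(π:ℂ)*((α:ℂ)-n)*I) ≠ 0 := by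
    simp only [mul_ne_zero_iff]
    exact ⟨⟨⟨two_ne_zero, hπC⟩, h1⟩, I_ne_zero⟩
  have c2 : (-(2*(π:ℂ)*((α:ℂ)+n)*I)) ≠ 0 := by
    rw [neg_ne_zero]
    simp only [mul_ne_zero_iff]
    exact ⟨⟨⟨two_ne_zero, hπC⟩, h2⟩, I_ne_zero⟩
  have key : ∀ x : ℝ, (fourier (-n) (x : AddCircle ((1:ℝ) - 0))) • ((Real.cos (2*π*α*(x-1/2)) : ℝ) : ℂ)
      = (Complex.exp (-(π*α)*I)/2) * Complex.exp ((2*(π:ℂ)*((α:ℂ)-n)*I) * x)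
        + (Complex.exp ((π*α)*I)/2) * Complex.exp ((-(2*(π:ℂ)*((α:ℂ)+n)*I)) * x) := by
    intro x
    rw [fourier_coe_apply, smul_eq_mul, Complex.ofReal_cos, Complex.cos]
    push_cast
    rw [show ((1:ℂ) - 0) = 1 by norm_num, div_one]
    have e1 : Complex.exp (2*(π:ℂ)*I*(-(n:ℂ))*x) * Complex.exp ((2*(π:ℂ)*α*(x-1/2))*I)
        = Complex.exp (-(π*α)*I) * Complex.exp ((2*(π:ℂ)*((α:ℂ)-n)*I) * x) := by
      rw [← Complex.exp_add, ← Complex.exp_add]; congr 1; ring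
    have e2 : Complex.exp (2*(π:ℂ)*I*(-(n:ℂ))*x) * Complex.exp (-(2*(π:ℂ)*α*(x-1/2))*I)
        = Complex.exp ((π*α)*I) * Complex.exp ((-(2*(π:ℂ)*((α:ℂ)+n)*I)) * x) := by
      rw [← Complex.exp_add, ← Complex.exp_add]; congr 1; ring
    calc Complex.exp (2*(π:ℂ)*I*(-(n:ℂ))*x) * ((Complex.exp ((2*(π:ℂ)*α*(x-1/2))*I) + Complex.exp (-(2*(π:ℂ)*α*(x-1/2))*I))/2)
        = (Complex.exp (2*(π:ℂ)*I*(-(n:ℂ))*x) * Complex.exp ((2*(π:ℂ)*α*(x-1/2))*I)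
           + Complex.exp (2*(π:ℂ)*I*(-(n:ℂ))*x) * Complex.exp (-(2*(π:ℂ)*α*(x-1/2))*I))/2 := by ring
      _ = _ := by rw [e1, e2]; ring
  rw [intervalIntegral.integral_congr (fun x _ => key x)]
  rw [intervalIntegral.integral_add ((Continuous.intervalIntegrable (by fun_prop) _ _)) ((Continuous.intervalIntegrable (by fun_prop) _ _))]
  rw [intervalIntegral.integral_const_mul, intervalIntegral.integral_const_mul,
    integral_exp_mul_complex c1, integral_exp_mul_complex c2]
  have hint : Complex.exp (((-n : ℤ) : ℂ) * (2*(π:ℂ)*I)) = 1 := Complex.exp_int_mul_two_pi_mul_I (-n)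
  have e3 : Complex.exp (2*(π:ℂ)*((α:ℂ)-n)*I * 1) = Complex.exp ((π*α)*I) * Complex.exp ((π*α)*I) := by
    rw [show (2*(π:ℂ)*((α:ℂ)-n)*I * 1) = (((π:ℂ)*α)*I + ((π:ℂ)*α)*I) + ((-n : ℤ) : ℂ) * (2*(π:ℂ)*I) by push_cast; ring,
      Complex.exp_add, hint, mul_one, Complex.exp_add]
  have e4 : Complex.exp (-(2*(π:ℂ)*((α:ℂ)+n)*I) * 1) = Complex.exp (-(π*α)*I) * Complex.exp (-(π*α)*I) := by
    rw [show (-(2*(π:ℂ)*((α:ℂ)+n)*I) * 1) = ((-((π:ℂ)*α))*I + (-((π:ℂ)*α))*I) + ((-n : ℤ) : ℂ) * (2*(π:ℂ)*I) by push_cast; ring,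
      Complex.exp_add, hint, mul_one, Complex.exp_add]
  simp only [Complex.ofReal_one, Complex.ofReal_zero]
  rw [e3, e4, mul_zero, mul_zero, Complex.exp_zero]
  push_cast [Complex.ofReal_sin]
  rw [Complex.sin]
  have h3 : ((α:ℂ)^2 - (n:ℂ)^2) ≠ 0 := by
    intro hc
    rcases mul_eq_zero.mp (by linear_combination hc : ((α:ℂ)-n)*((α:ℂ)+n) = 0) with hh | hh
    exacts [h1 hh, h2 hh]
  set u : ℂ := Complex.exp ((↑π*↑α:ℂ)*I) with hu
  set v : ℂ := Complex.exp (-(↑π*↑α:ℂ)*I) with hv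
  have huv : u * v = 1 := by
    rw [hu, hv, ← Complex.exp_add]
    simp
  have r1 : v*(u*u-1) = u - v := by linear_combination u * huv
  have r2 : u*(v*v-1) = v - u := by linear_combination v * huv
  have T1 : v / 2 * ((u*u-1)/(2*(π:ℂ)*((α:ℂ)-(n:ℂ))*I)) = (u-v)/(2*(2*(π:ℂ)*((α:ℂ)-(n:ℂ))*I)) := by
    rw [div_mul_div_comm, r1]
  have T2 : u / 2 * ((v*v-1)/(-(2*(π:ℂ)*((α:ℂ)+(n:ℂ))*I))) = (u-v)/(2*(2*(π:ℂ)*((α:ℂ)+(n:ℂ))*I)) := by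
    rw [div_mul_div_comm, r2, mul_neg, div_neg, ← neg_div, neg_sub]
  rw [show (1 / ((1:ℝ) - 0)) = 1 by norm_num, one_smul]
  rw [T1, T2]
  have hA : (2*(2*(π:ℂ)*((α:ℂ)-(n:ℂ))*I)) ≠ 0 := by
    simp only [mul_ne_zero_iff]
    exact ⟨two_ne_zero, ⟨⟨two_ne_zero, hπC⟩, h1⟩, Complex.I_ne_zero⟩
  have hB : (2*(2*(π:ℂ)*((α:ℂ)+(n:ℂ))*I)) ≠ 0 := by
    simp only [mul_ne_zero_iff]
    exact ⟨two_ne_zero, ⟨⟨two_ne_zero, hπC⟩, h2⟩, Complex.I_ne_zero⟩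
  have hC : ((π:ℂ)*((α:ℂ)^2-(n:ℂ)^2)) ≠ 0 := mul_ne_zero hπC h3
  rw [div_add_div _ _ hA hB, div_eq_div_iff (mul_ne_zero hA hB) hC]
  linear_combination (8*(π:ℂ)^2*(α:ℂ)*((α:ℂ)^2-(n:ℂ)^2)*(u-v)*I) * Complex.I_sq

lemma aux_hasSum (α : ℝ) (hα : ∀ n : ℤ, α ≠ n) :
    HasSum (fun n : ℤ => α * Real.sin (π*α) / (π*(α^2 - (n:ℝ)^2))) (Real.cos (π*α)) := by
  haveI : Fact ((0:ℝ) < 1) := ⟨zero_lt_one⟩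
  set g : ℝ → ℂ := fun x => ((Real.cos (2*π*α*(x-1/2)) : ℝ) : ℂ) with hg
  have hg01 : g 0 = g 1 := by
    simp only [hg]
    rw [show 2*π*α*((0:ℝ)-1/2) = -(2*π*α*((1:ℝ)-1/2)) by ring, Real.cos_neg]
  have hgc : Continuous g := by fun_prop
  set F : C(AddCircle (1:ℝ), ℂ) := ⟨AddCircle.liftIco 1 0 g,
    AddCircle.liftIco_zero_continuous hg01 hgc.continuousOn⟩ with hF
  have hcoeff : ∀ n : ℤ, fourierCoeff (F : AddCircle (1:ℝ) → ℂ) n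
      = ((α * Real.sin (π*α) / (π*(α^2 - (n:ℝ)^2)) : ℝ) : ℂ) := by
    intro n
    have h1 : (F : AddCircle (1:ℝ) → ℂ) = AddCircle.liftIco 1 0 g := rfl
    rw [h1, fourierCoeff_liftIco_eq]
    simpa only [zero_add] using aux_coeff α hα n
  have hsummable : Summable (fun n : ℤ => fourierCoeff (F : AddCircle (1:ℝ) → ℂ) n) := by
    rw [funext hcoeff]
    rw [Complex.summable_ofReal]
    have hrew : (fun n : ℤ => α * Real.sin (π*α) / (π*(α^2 - (n:ℝ)^2)))
        = fun n : ℤ => (α * Real.sin (π*α) / π) * (1 / (α^2 - (n:ℝ)^2)) := by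
      funext n
      rw [mul_one_div, div_div]
    rw [hrew]
    apply Summable.mul_left
    have hnat : Summable (fun n : ℕ => 1 / (α^2 - ((n:ℝ))^2)) := by
      have base : Summable (fun n : ℕ => 1 / (n:ℝ)^2) :=
        Real.summable_one_div_nat_pow.mpr one_lt_two
      apply summable_of_isBigO_nat base
      apply Asymptotics.isBigO_of_div_tendsto_nhds (c := (-1 : ℝ))
      · filter_upwards [Filter.eventually_ge_atTop 1] with n hn hzero
        exfalso
        have hn' : (0:ℝ) < (n:ℝ)^2 := by positivity
        rw [div_eq_zero_iff] at hzero
        rcases hzero with hh | hh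
        · exact one_ne_zero hh
        · exact hn'.ne' hh
      · have hsq : Filter.Tendsto (fun n : ℕ => ((n:ℝ)^2)) Filter.atTop Filter.atTop :=
          (tendsto_pow_atTop two_ne_zero).comp tendsto_natCast_atTop_atTop
        have hinv : Filter.Tendsto (fun n : ℕ => ((n:ℝ)^2)⁻¹) Filter.atTop (nhds 0) :=
          hsq.inv_tendsto_atTop
        have h1 : Filter.Tendsto (fun n : ℕ => α^2 * ((n:ℝ)^2)⁻¹ - 1) Filter.atTop (nhds (-1)) := by
          have := (hinv.const_mul (α^2)).sub_const 1
          simpa using this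
        have h2 : Filter.Tendsto (fun n : ℕ => (α^2 * ((n:ℝ)^2)⁻¹ - 1)⁻¹) Filter.atTop (nhds (-1)) := by
          have h3 := h1.inv₀ (by norm_num : (-1:ℝ) ≠ 0)
          rw [show ((-1:ℝ))⁻¹ = -1 by norm_num] at h3
          exact h3
        apply h2.congr'
        filter_upwards [Filter.eventually_ge_atTop 1] with n hn
        have hn0 : ((n:ℝ))^2 ≠ 0 := by positivity
        simp only [Pi.div_apply]
        have hd : α^2 - (n:ℝ)^2 ≠ 0 := by
          intro hc
          rcases mul_eq_zero.mp (by linear_combination hc : (α - n) * (α + n) = 0) with hh | hh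
          · exact hα n (by push_cast; linarith)
          · exact hα (-(n:ℤ)) (by push_cast; linarith)
        have hrew2 : α^2 * ((n:ℝ)^2)⁻¹ - 1 = (α^2 - (n:ℝ)^2)/(n:ℝ)^2 := by
          field_simp
        rw [hrew2, inv_div]
        field_simp
    apply Summable.of_nat_of_neg
    · exact hnat.congr (fun n => by norm_num)
    · refine hnat.congr (fun n => ?_)
      push_cast
      norm_num
  have hpoint := has_pointwise_sum_fourier_series_of_summable hsummable (0 : AddCircle (1:ℝ))
  have hF0 : F (0 : AddCircle (1:ℝ)) = ((Real.cos (π*α) : ℝ) : ℂ) := by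
    have h0 : ((0:ℝ) : AddCircle (1:ℝ)) = (0 : AddCircle (1:ℝ)) := by norm_cast
    rw [hF, ← h0]
    show AddCircle.liftIco 1 0 g ((0:ℝ) : AddCircle (1:ℝ)) = _
    rw [AddCircle.liftIco_coe_apply (by norm_num : (0:ℝ) ∈ Set.Ico (0:ℝ) (0+1))]
    simp only [hg]
    rw [show 2*π*α*((0:ℝ)-1/2) = -(π*α) by ring, Real.cos_neg]
  rw [hF0] at hpoint
  have hfun : (fun i : ℤ => fourierCoeff (F : AddCircle (1:ℝ) → ℂ) i • fourier i (0 : AddCircle (1:ℝ)))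
      = fun i : ℤ => ((α * Real.sin (π*α) / (π*(α^2 - (i:ℝ)^2)) : ℝ) : ℂ) := by
    funext i
    rw [hcoeff i, fourier_eval_zero, smul_eq_mul, mul_one]
  rw [hfun] at hpoint
  exact Complex.hasSum_ofReal.mp hpoint

/-- For every real `θ` with `θ/π` not an integer, the symmetric partial sums
`∑_{j=-N}^{N} 2/(θ + 2jπ)` converge, and their limit is `(cos θ + 1)/sin θ`. -/
theorem stmt_0 (θ : ℝ) (h : ∀ k : ℤ, θ / π ≠ (k : ℝ)) :
    Tendsto (fun N : ℕ => ∑ j ∈ Finset.Icc (-(N : ℤ)) (N : ℤ), 2 / (θ + 2 * (j : ℝ) * π))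
      atTop (𝓝 ((Real.cos θ + 1) / Real.sin θ)) := by
  have hπ : (0:ℝ) < π := Real.pi_pos
  set α : ℝ := θ / (2 * π) with hαdef
  have hθ : θ = 2 * π * α := by
    rw [hαdef]; field_simp
  have hα : ∀ n : ℤ, α ≠ n := by
    intro n hc
    apply h (2 * n)
    rw [hθ, hc]
    push_cast
    field_simp
  have hsinθ : Real.sin θ ≠ 0 := by
    rw [Real.sin_ne_zero_iff]
    intro n hc
    apply h n
    rw [← hc]
    field_simp
  have hs : Real.sin (π * α) ≠ 0 ∧ Real.cos (π * α) ≠ 0 := by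
    have hdouble : Real.sin θ = 2 * Real.sin (π*α) * Real.cos (π*α) := by
      rw [show θ = 2 * (π*α) by rw [hθ]; ring, Real.sin_two_mul]
    rw [hdouble] at hsinθ
    constructor <;> intro hc <;> apply hsinθ <;> rw [hc] <;> ring
  have hlim : (Real.cos θ + 1) / Real.sin θ = Real.cos (π*α) / Real.sin (π*α) := by
    rw [show θ = 2 * (π*α) by rw [hθ]; ring, Real.sin_two_mul, Real.cos_two_mul]
    rw [div_eq_div_iff (by rw [← Real.sin_two_mul]; rw [show 2 * (π*α) = θ by rw [hθ]; ring]; exact hsinθ) hs.1]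
    ring
  have HS := aux_hasSum α hα
  have HS2 : HasSum (fun n : ℤ => α / (π*(α^2 - (n:ℝ)^2))) (Real.cos (π*α) / Real.sin (π*α)) := by
    have h2 := HS.div_const (Real.sin (π*α))
    have hfun : (fun n : ℤ => α * Real.sin (π*α) / (π*(α^2 - (n:ℝ)^2)) / Real.sin (π*α))
        = fun n : ℤ => α / (π*(α^2 - (n:ℝ)^2)) := by
      funext n
      rw [div_div, mul_comm (π*(α^2 - (n:ℝ)^2)) (Real.sin (π*α)),
        mul_comm α (Real.sin (π*α)), mul_div_mul_left _ _ hs.1]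
    rwa [hfun] at h2
  have hIccTendsto : Tendsto (fun N : ℕ => Finset.Icc (-(N:ℤ)) (N:ℤ)) atTop atTop := by
    apply Filter.tendsto_atTop_finset_of_monotone
    · intro N M hNM
      apply Finset.Icc_subset_Icc <;> omega
    · intro x
      exact ⟨x.natAbs, by rw [Finset.mem_Icc]; omega⟩
  have HS2' : Tendsto (fun s : Finset ℤ => ∑ j ∈ s, α / (π*(α^2 - (j:ℝ)^2)))
      atTop (𝓝 (Real.cos (π*α) / Real.sin (π*α))) := HS2
  have hTend : Tendsto (fun N : ℕ => ∑ j ∈ Finset.Icc (-(N:ℤ)) (N:ℤ), α / (π*(α^2 - (j:ℝ)^2)))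
      atTop (𝓝 (Real.cos (π*α) / Real.sin (π*α))) := HS2'.comp hIccTendsto
  rw [hlim]
  refine hTend.congr (fun N => ?_)
  have hterm : ∀ j : ℤ, 2 / (θ + 2 * (j:ℝ) * π)
      = α / (π*(α^2 - (j:ℝ)^2)) + (-(j:ℝ)) / (π*(α^2 - (j:ℝ)^2)) := by
    intro j
    have hj1 : α + (j:ℝ) ≠ 0 := by
      intro hc
      exact hα (-j) (by push_cast; linarith)
    have hj2 : α - (j:ℝ) ≠ 0 := by
      intro hc
      exact hα j (by linarith)
    have hd : α^2 - (j:ℝ)^2 ≠ 0 := by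
      intro hc
      rcases mul_eq_zero.mp (by linear_combination hc : (α - j) * (α + j) = 0) with hh | hh
      exacts [hj2 hh, hj1 hh]
    rw [hθ]
    rw [show 2 * π * α + 2 * (j:ℝ) * π = 2 * π * (α + j) by ring]
    rw [div_add_div _ _ (mul_ne_zero hπ.ne' hd) (mul_ne_zero hπ.ne' hd)]
    rw [div_eq_div_iff (mul_ne_zero (by positivity) hj1) (mul_ne_zero (mul_ne_zero hπ.ne' hd) (mul_ne_zero hπ.ne' hd))]
    ring
  have hodd : ∑ j ∈ Finset.Icc (-(N:ℤ)) (N:ℤ), (-(j:ℝ)) / (π*(α^2 - (j:ℝ)^2)) = 0 := by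
    apply Finset.sum_involution (fun j _ => -j)
    · intro j _
      push_cast
      ring
    · intro j _ hne hc
      apply hne
      have : j = 0 := by omega
      rw [this]
      norm_num
    · intro j _
      exact neg_neg j
    · intro j hj
      rw [Finset.mem_Icc] at hj ⊢
      omega
  calc ∑ j ∈ Finset.Icc (-(N:ℤ)) (N:ℤ), α / (π*(α^2 - (j:ℝ)^2))
      = ∑ j ∈ Finset.Icc (-(N:ℤ)) (N:ℤ), (α / (π*(α^2 - (j:ℝ)^2)) + (-(j:ℝ)) / (π*(α^2 - (j:ℝ)^2))) := by
        rw [Finset.sum_add_distrib, hodd, add_zero]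
    _ = ∑ j ∈ Finset.Icc (-(N:ℤ)) (N:ℤ), 2 / (θ + 2 * (j:ℝ) * π) := by
        exact Finset.sum_congr rfl (fun j _ => (hterm j).symm)
end

section
/- For every real number θ such that θ/π is not an integer, the symmetric partial sums ∑_{j=-N}^{N} 2/(θ + (2j+1)π) converge as N → ∞, and their limit equals (cos θ − 1)/sin θ. -/
/-!
Writing `θ = (2x - 1)π`, the `j`-th term is `π⁻¹ / (x + j)`, and the symmetric partial sums of
`∑ 1 / (x + j)` converge to `π cot (πx)` by the partial fraction expansion of the cotangent.
Finally `cot (θ/2 + π/2) = -tan (θ/2) = (cos θ - 1) / sin θ`.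
-/

open Real Filter Topology

theorem Complex.sum_Icc_one_div_add_intCast (x : ℂ) (N : ℕ) :
    ∑ j ∈ Finset.Icc (-(N : ℤ)) N, 1 / (x + j) = 1 / x + ∑ j ∈ Finset.range N, cotTerm x j := by
  induction N with
  | zero => simp
  | succ N ih =>
    rw [Nat.cast_succ, Finset.sum_Icc_succ_eq_add_endpoints, ih, Finset.sum_range_succ, cotTerm]
    push_cast
    ring_nf

open Complex SummationFilter in
theorem Complex.hasSum_symmetricIcc_one_div_add_intCast {x : ℂ} (hx : x ∈ integerComplement) :
    HasSum (fun n : ℤ ↦ 1 / (x + n)) (π * cot (π * x)) (symmetricIcc ℤ) := by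
  rw [hasSum_symmetricIcc_iff]
  simp_rw [sum_Icc_one_div_add_intCast]
  simpa using (tendsto_logDeriv_euler_cot_sub hx).const_add (1 / x)

open SummationFilter in
theorem Real.hasSum_symmetricIcc_one_div_add_intCast {x : ℝ} (hx : ∀ n : ℤ, x ≠ n) :
    HasSum (fun n : ℤ ↦ 1 / (x + n)) (π * cot (π * x)) (symmetricIcc ℤ) := by
  have hx' : (x : ℂ) ∈ Complex.integerComplement := by
    rintro ⟨n, hn⟩
    exact hx n (by exact_mod_cast hn.symm)
  rw [← Complex.hasSum_ofReal]
  push_cast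
  exact Complex.hasSum_symmetricIcc_one_div_add_intCast hx'

theorem Real.cot_add_pi_div_two (x : ℝ) : cot (x + π / 2) = -tan x := by
  rw [cot_eq_cos_div_sin, tan_eq_sin_div_cos, cos_add_pi_div_two, sin_add_pi_div_two, neg_div]

theorem Real.cos_sub_one_div_sin (θ : ℝ) : (cos θ - 1) / sin θ = -tan (θ / 2) := by
  have h : θ = 2 * (θ / 2) := by ring
  rw [h, cos_two_mul, cos_sq', sin_two_mul, ← h, tan_eq_sin_div_cos]
  rcases eq_or_ne (sin (θ / 2)) 0 with hs | hs
  · simp [hs]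
  rcases eq_or_ne (cos (θ / 2)) 0 with hc | hc
  · simp [hc]
  field_simp
  ring

/-- For every real `θ` with `θ/π` not an integer, the symmetric partial sums
`∑_{j=-N}^{N} 2/(θ + (2j+1)π)` converge, and their limit is `(cos θ - 1)/sin θ`. -/
theorem stmt_1 (θ : ℝ) (h : ∀ k : ℤ, θ / π ≠ (k : ℝ)) :
    Tendsto (fun N : ℕ => ∑ j ∈ Finset.Icc (-(N : ℤ)) (N : ℤ),
        2 / (θ + (2 * (j : ℝ) + 1) * π))
      atTop (𝓝 ((Real.cos θ - 1) / Real.sin θ)) := by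
  obtain ⟨x, rfl⟩ : ∃ x, θ = (2 * x - 1) * π := ⟨θ / (2 * π) + 1 / 2, by field_simp; ring⟩
  have hx : ∀ n : ℤ, x ≠ n := by
    rintro n rfl
    exact h (2 * n - 1) (by push_cast; field_simp)
  have hterm : ∀ j : ℤ, 2 / ((2 * x - 1) * π + (2 * (j : ℝ) + 1) * π) = π⁻¹ * (1 / (x + j)) := by
    intro j
    rw [show (2 * x - 1) * π + (2 * (j : ℝ) + 1) * π = 2 * π * (x + j) by ring]
    field_simp
  have hlim : π⁻¹ * (π * cot (π * x)) =
      (Real.cos ((2 * x - 1) * π) - 1) / Real.sin ((2 * x - 1) * π) := by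
    rw [inv_mul_cancel_left₀ pi_ne_zero, cos_sub_one_div_sin,
      show π * x = (2 * x - 1) * π / 2 + π / 2 by ring, cot_add_pi_div_two]
  rw [← hlim, ← SummationFilter.hasSum_symmetricIcc_iff]
  simpa only [hterm] using (hasSum_symmetricIcc_one_div_add_intCast hx).mul_left π⁻¹
end

section
/- Let b > 0 and s be real numbers such that θ := π(1−s)/b satisfies θ/π ∉ ℤ, and let m_e, m_o be arbitrary real numbers. Then the symmetric partial sums ∑_{j=-N}^{N} [ m_e/(1 − s + 2bj) + m_o/(1 − s + (2j+1)b) ] converge as N → ∞, and their limit equals (π/(2b))·[(m_e + m_o)·cot θ + (m_e − m_o)·csc θ]. -/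
/-!
With `x = θ / π = (1 - s) / b`, the even and odd families are `1 / (2b)` times the symmetric
partial sums of `∑ⱼ 1 / (y + j)` at `y = x / 2` and `y = x / 2 + 1 / 2`. By the Mittag-Leffler
expansion of the cotangent (which Mathlib derives from Euler's sine product) these tend to
`π cot (θ / 2)` and `π cot (θ / 2 + π / 2)`, and the half-angle formulas rewrite these two values
as `π (cot θ + csc θ)` and `π (cot θ - csc θ)`.
-/

open Real Filter Topology

theorem Finset.sum_Icc_neg_eq_add_sum_range {M : Type*} [AddCommGroup M] (f : ℤ → M) (N : ℕ) :
    ∑ m ∈ Icc (-N : ℤ) N, f m = f 0 + ∑ n ∈ range N, (f (n + 1) + f (-(n + 1))) := by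
  induction N with
  | zero => simp
  | succ N ih =>
    rw [Nat.cast_succ, sum_Icc_succ_eq_add_endpoints, ih, sum_range_succ]
    abel

theorem Complex.tendsto_sum_Icc_one_div_add_int {x : ℂ} (hx : x ∈ integerComplement) :
    Tendsto (fun N : ℕ ↦ ∑ j ∈ Finset.Icc (-N : ℤ) N, 1 / (x + j)) atTop
      (𝓝 (π * cot (π * x))) := by
  have h := (tendsto_logDeriv_euler_cot_sub hx).const_add (1 / x)
  rw [add_sub_cancel] at h
  refine h.congr fun N ↦ ?_
  rw [Finset.sum_Icc_neg_eq_add_sum_range]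
  push_cast
  simp only [cotTerm, add_zero, sub_eq_add_neg, add_comm (1 / (x + -_))]

theorem Real.tendsto_sum_Icc_one_div_add_int {y : ℝ} (hy : ∀ k : ℤ, y ≠ k) :
    Tendsto (fun N : ℕ ↦ ∑ j ∈ Finset.Icc (-N : ℤ) N, 1 / (y + j)) atTop
      (𝓝 (π * cot (π * y))) := by
  have hy' : (y : ℂ) ∈ Complex.integerComplement := by
    rintro ⟨k, hk⟩
    exact hy k (mod_cast hk.symm)
  rw [← tendsto_ofReal_iff]
  push_cast
  simpa [Complex.ofReal_cot] using Complex.tendsto_sum_Icc_one_div_add_int hy'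

theorem Real.cot_half {θ : ℝ} (h : sin θ ≠ 0) : cot (θ / 2) = cos θ / sin θ + 1 / sin θ := by
  obtain ⟨φ, rfl⟩ : ∃ φ, θ = 2 * φ := ⟨θ / 2, by ring⟩
  rw [mul_div_cancel_left₀ φ two_ne_zero, cot_eq_cos_div_sin, cos_two_mul]
  rw [sin_two_mul] at h ⊢
  have hs : sin φ ≠ 0 := by rintro h0; simp [h0] at h
  have hc : cos φ ≠ 0 := by rintro h0; simp [h0] at h
  field_simp
  ring

theorem Real.cot_half_add_pi_div_two {θ : ℝ} (h : sin θ ≠ 0) :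
    cot (θ / 2 + π / 2) = cos θ / sin θ - 1 / sin θ := by
  obtain ⟨φ, rfl⟩ : ∃ φ, θ = 2 * φ := ⟨θ / 2, by ring⟩
  rw [mul_div_cancel_left₀ φ two_ne_zero, cot_eq_cos_div_sin, cos_add_pi_div_two,
    sin_add_pi_div_two, cos_two_mul_eq_one_sub]
  rw [sin_two_mul] at h ⊢
  have hs : sin φ ≠ 0 := by rintro h0; simp [h0] at h
  have hc : cos φ ≠ 0 := by rintro h0; simp [h0] at h
  field_simp
  ring

theorem stmt_2_general (b s : ℝ) (θ : ℝ) (hθ : θ = π * (1 - s) / b)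
    (h : ∀ k : ℤ, θ / π ≠ (k : ℝ)) (me mo : ℝ) :
    Tendsto (fun N : ℕ => ∑ j ∈ Finset.Icc (-(N : ℤ)) (N : ℤ),
        (me / (1 - s + 2 * b * (j : ℝ)) + mo / (1 - s + (2 * (j : ℝ) + 1) * b)))
      atTop
      (𝓝 ((π / (2 * b)) *
        ((me + mo) * (Real.cos θ / Real.sin θ) + (me - mo) * (1 / Real.sin θ)))) := by
  have hb : b ≠ 0 := by
    rintro rfl
    exact h 0 (by simp [hθ])
  have hsin : sin θ ≠ 0 := fun h0 ↦ by
    obtain ⟨k, hk⟩ := sin_eq_zero_iff.1 h0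
    exact h k (by rw [← hk, mul_div_cancel_right₀ _ pi_ne_zero])
  have heven : ∀ k : ℤ, θ / π / 2 ≠ k := fun k hk ↦ h (2 * k) (by push_cast; linarith)
  have hodd : ∀ k : ℤ, θ / π / 2 + 1 / 2 ≠ k := fun k hk ↦ h (2 * k - 1) (by push_cast; linarith)
  have hs : 1 - s = b * (θ / π) := by
    rw [hθ]
    field_simp
  have hsum (N : ℕ) : ∑ j ∈ Finset.Icc (-(N : ℤ)) (N : ℤ),
      (me / (1 - s + 2 * b * (j : ℝ)) + mo / (1 - s + (2 * (j : ℝ) + 1) * b)) =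
      me / (2 * b) * ∑ j ∈ Finset.Icc (-(N : ℤ)) (N : ℤ), 1 / (θ / π / 2 + j) +
        mo / (2 * b) * ∑ j ∈ Finset.Icc (-(N : ℤ)) (N : ℤ), 1 / (θ / π / 2 + 1 / 2 + j) := by
    simp only [Finset.mul_sum, ← Finset.sum_add_distrib, mul_one_div, div_div, hs]
    congr! 3 <;> ring
  have hlim : me / (2 * b) * (π * cot (π * (θ / π / 2))) +
      mo / (2 * b) * (π * cot (π * (θ / π / 2 + 1 / 2))) =
      π / (2 * b) * ((me + mo) * (cos θ / sin θ) + (me - mo) * (1 / sin θ)) := by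
    rw [show π * (θ / π / 2) = θ / 2 by field_simp,
      show π * (θ / π / 2 + 1 / 2) = θ / 2 + π / 2 by field_simp, cot_half hsin,
      cot_half_add_pi_div_two hsin]
    ring
  rw [funext hsum, ← hlim]
  exact ((tendsto_sum_Icc_one_div_add_int heven).const_mul _).add
    ((tendsto_sum_Icc_one_div_add_int hodd).const_mul _)

/-- Let `b > 0`, `s` real, `θ := π(1-s)/b` with `θ/π` not an integer, and `m_e, m_o` real.
Then `∑_{j=-N}^{N} [m_e/(1-s+2bj) + m_o/(1-s+(2j+1)b)]` converges as `N → ∞` to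
`(π/(2b)) * ((m_e+m_o) cot θ + (m_e-m_o) csc θ)`. -/
theorem stmt_2 (b s : ℝ) (hb : 0 < b) (θ : ℝ) (hθ : θ = π * (1 - s) / b)
    (h : ∀ k : ℤ, θ / π ≠ (k : ℝ)) (me mo : ℝ) :
    Tendsto (fun N : ℕ => ∑ j ∈ Finset.Icc (-(N : ℤ)) (N : ℤ),
        (me / (1 - s + 2 * b * (j : ℝ)) + mo / (1 - s + (2 * (j : ℝ) + 1) * b)))
      atTop
      (𝓝 ((π / (2 * b)) *
        ((me + mo) * (Real.cos θ / Real.sin θ) + (me - mo) * (1 / Real.sin θ)))) :=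
  stmt_2_general b s θ hθ h me mo
end

section
/- Let V be a finite-dimensional real inner product space, let k ≥ 1, and for each index a ∈ {1,…,k} let n_a ∈ V be a nonzero vector, b_a > 0 a real number, and m_a^e > 0, m_a^o ≥ 0 real numbers. Define C := { w ∈ V : 0 < 1 − ⟨n_a, w⟩ < b_a for all a } and define X : C → V by X(w) := ∑_{a=1}^{k} (π/(2b_a))·[ (m_a^e + m_a^o)·cot(π(1 − ⟨n_a, w⟩)/b_a) + (m_a^e − m_a^o)·csc(π(1 − ⟨n_a, w⟩)/b_a) ]·n_a. Fix an index a₀, a point w₀ ∈ C, and a point w₀′ ∈ V with ⟨n_{a₀}, w₀′⟩ = 1 and 0 < 1 − ⟨n_a, w₀′⟩ < b_a for every a ≠ a₀, and set w_ε := ε·w₀ + (1 − ε)·w₀′ for ε ∈ (0,1). Then w_ε ∈ C for every ε ∈ (0,1), ‖X(w_ε)‖ → ∞ as ε → 0⁺, and X(w_ε)/‖X(w_ε)‖ → n_{a₀}/‖n_{a₀}‖ as ε → 0⁺. -/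
open Real Filter Topology RealInnerProductSpace

/-! Along the segment, `1 - ⟪n a, w_ε⟫ = ε (1 - ⟪n a, w₀⟫) + (1 - ε) (1 - ⟪n a, w₀'⟫)` is a convex
combination, which gives `w_ε ∈ C`. For `a ≠ a₀` it tends to a point of `(0, b a)`, where the
coefficient of `n a` is continuous, so these terms converge. For `a₀` it is
`ε (1 - ⟪n a₀, w₀⟫) → 0⁺`, and there the cotangent and cosecant terms are both of order `1 / ε`
with total weight `2 me a₀ > 0`, so the coefficient of `n a₀` tends to `+∞`. Finally,
`f • v + R` with `f → +∞` and `R` convergent has norm tending to `+∞` and direction tending to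
`v / ‖v‖`. -/

section Normalize

variable {α V : Type*} [NormedAddCommGroup V] [NormedSpace ℝ V] {l : Filter α}
  {f : α → ℝ} {R : α → V} {r v : V}

theorem smul_add_eq_smul_add_inv_smul {c : ℝ} (hc : c ≠ 0) (v w : V) :
    c • v + w = c • (v + c⁻¹ • w) := by
  rw [smul_add, smul_inv_smul₀ hc]

theorem Filter.Tendsto.add_inv_smul_of_atTop (hf : Tendsto f l atTop) (hR : Tendsto R l (𝓝 r))
    (v : V) : Tendsto (fun x => v + (f x)⁻¹ • R x) l (𝓝 v) := by
  simpa using tendsto_const_nhds.add ((tendsto_inv_atTop_zero.comp hf).smul hR)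

theorem Filter.Tendsto.norm_smul_add_atTop (hf : Tendsto f l atTop) (hR : Tendsto R l (𝓝 r))
    (hv : v ≠ 0) : Tendsto (fun x => ‖f x • v + R x‖) l atTop := by
  refine (hf.atTop_mul_pos (norm_pos_iff.2 hv) (hf.add_inv_smul_of_atTop hR v).norm).congr' ?_
  filter_upwards [hf.eventually_gt_atTop 0] with x hx
  rw [smul_add_eq_smul_add_inv_smul hx.ne', norm_smul, Real.norm_of_nonneg hx.le]

theorem Filter.Tendsto.normalize_smul_add (hf : Tendsto f l atTop) (hR : Tendsto R l (𝓝 r))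
    (hv : v ≠ 0) :
    Tendsto (fun x => ‖f x • v + R x‖⁻¹ • (f x • v + R x)) l (𝓝 (‖v‖⁻¹ • v)) := by
  have hu := hf.add_inv_smul_of_atTop hR v
  refine ((hu.norm.inv₀ (norm_ne_zero_iff.2 hv)).smul hu).congr' ?_
  filter_upwards [hf.eventually_gt_atTop 0] with x hx
  rw [smul_add_eq_smul_add_inv_smul hx.ne', norm_smul, Real.norm_of_nonneg hx.le, smul_smul]
  congr 1
  field_simp

end Normalize

theorem mul_add_one_sub_mul_mem_Ioo {ε p q b : ℝ} (hε : ε ∈ Set.Ioo 0 1) (hp : p ∈ Set.Ioo 0 b)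
    (hq : q ∈ Set.Ico 0 b) : ε * p + (1 - ε) * q ∈ Set.Ioo 0 b := by
  obtain ⟨hε₀, hε₁⟩ := hε
  obtain ⟨hp₀, hpb⟩ := hp
  obtain ⟨hq₀, hqb⟩ := hq
  constructor <;> nlinarith

theorem one_sub_inner_smul_add_smul {V : Type*} [NormedAddCommGroup V] [InnerProductSpace ℝ V]
    (v x y : V) (ε : ℝ) :
    1 - ⟪v, ε • x + (1 - ε) • y⟫ = ε * (1 - ⟪v, x⟫) + (1 - ε) * (1 - ⟪v, y⟫) := by
  simp only [inner_add_right, inner_smul_right]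
  ring

/-- `X w = ∑ a, meanCurvatureCoeff (b a) (me a) (mo a) (1 - ⟪n a, w⟫) • n a`. -/
noncomputable def meanCurvatureCoeff (b me mo s : ℝ) : ℝ :=
  π / (2 * b) * ((me + mo) * (Real.cos (π * s / b) / Real.sin (π * s / b)) +
    (me - mo) * (1 / Real.sin (π * s / b)))

theorem continuousAt_meanCurvatureCoeff {b s : ℝ} (me mo : ℝ) (hs : s ∈ Set.Ioo 0 b) :
    ContinuousAt (meanCurvatureCoeff b me mo) s := by
  have hb : 0 < b := hs.1.trans hs.2
  have hsin : Real.sin (π * s / b) ≠ 0 := by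
    refine (Real.sin_pos_of_pos_of_lt_pi (by have := hs.1; positivity) ?_).ne'
    rw [div_lt_iff₀ hb]
    nlinarith [Real.pi_pos, hs.2]
  unfold meanCurvatureCoeff
  fun_prop (disch := exact hsin)

theorem tendsto_meanCurvatureCoeff_atTop {b me : ℝ} (mo : ℝ) (hb : 0 < b) (hme : 0 < me) :
    Tendsto (meanCurvatureCoeff b me mo) (𝓝[>] 0) atTop := by
  have hθ : Tendsto (fun s => π * s / b) (𝓝[>] 0) (𝓝 0) := by
    simpa using ((continuous_const.mul continuous_id).div_const b).tendsto 0 |>.mono_left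
      nhdsWithin_le_nhds
  have hsin : Tendsto (fun s => Real.sin (π * s / b)) (𝓝[>] 0) (𝓝[>] 0) := by
    refine tendsto_nhdsWithin_of_tendsto_nhds_of_eventually_within _
      (by simpa [Function.comp_def] using (Real.continuous_sin.tendsto 0).comp hθ) ?_
    filter_upwards [Ioo_mem_nhdsGT hb] with s hs
    refine Real.sin_pos_of_pos_of_lt_pi (by have := hs.1; positivity) ?_
    rw [div_lt_iff₀ hb]
    nlinarith [Real.pi_pos, hs.2]
  have hweight : Tendsto (fun s => π / (2 * b) * ((me + mo) * Real.cos (π * s / b) + (me - mo)))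
      (𝓝[>] 0) (𝓝 (π / (2 * b) * (2 * me))) := by
    have hcos : Tendsto (fun s => Real.cos (π * s / b)) (𝓝[>] 0) (𝓝 1) := by
      simpa [Function.comp_def] using (Real.continuous_cos.tendsto 0).comp hθ
    convert ((hcos.const_mul (me + mo)).add_const (me - mo)).const_mul (π / (2 * b)) using 2
    ring
  have hfactor : meanCurvatureCoeff b me mo =
      fun s => π / (2 * b) * ((me + mo) * Real.cos (π * s / b) + (me - mo)) *
        (Real.sin (π * s / b))⁻¹ := by
    funext s
    simp only [meanCurvatureCoeff, div_eq_mul_inv]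
    ring
  rw [hfactor]
  exact hweight.pos_mul_atTop (by positivity) hsin.inv_tendsto_nhdsGT_zero

theorem stmt_5_general {V : Type*} [NormedAddCommGroup V] [InnerProductSpace ℝ V]
    (k : ℕ)
    (n : Fin k → V) (hn : ∀ a, n a ≠ 0)
    (b : Fin k → ℝ) (hb : ∀ a, 0 < b a)
    (me mo : Fin k → ℝ) (hme : ∀ a, 0 < me a)
    (C : Set V)
    (hC : C = {w : V | ∀ a, 0 < 1 - ⟪n a, w⟫ ∧ 1 - ⟪n a, w⟫ < b a})
    (X : V → V)
    (hX : ∀ w, X w = ∑ a, ((π / (2 * b a)) *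
        ((me a + mo a) *
            (Real.cos (π * (1 - ⟪n a, w⟫) / b a) / Real.sin (π * (1 - ⟪n a, w⟫) / b a)) +
          (me a - mo a) * (1 / Real.sin (π * (1 - ⟪n a, w⟫) / b a)))) • n a)
    (a₀ : Fin k) (w₀ : V) (hw₀ : w₀ ∈ C)
    (w₀' : V) (hw₀'₁ : ⟪n a₀, w₀'⟫ = 1)
    (hw₀'₂ : ∀ a, a ≠ a₀ → 0 < 1 - ⟪n a, w₀'⟫ ∧ 1 - ⟪n a, w₀'⟫ < b a) :
    (∀ ε ∈ Set.Ioo (0 : ℝ) 1, (ε • w₀ + (1 - ε) • w₀') ∈ C) ∧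
    Tendsto (fun ε : ℝ => ‖X (ε • w₀ + (1 - ε) • w₀')‖) (𝓝[>] 0) atTop ∧
    Tendsto (fun ε : ℝ => ‖X (ε • w₀ + (1 - ε) • w₀')‖⁻¹ • X (ε • w₀ + (1 - ε) • w₀'))
      (𝓝[>] 0) (𝓝 (‖n a₀‖⁻¹ • n a₀)) := by
  subst hC
  set f : Fin k → ℝ → ℝ := fun a ε =>
    meanCurvatureCoeff (b a) (me a) (mo a) (1 - ⟪n a, ε • w₀ + (1 - ε) • w₀'⟫)
  have hf : ∀ a ε, f a ε = meanCurvatureCoeff (b a) (me a) (mo a)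
      (ε * (1 - ⟪n a, w₀⟫) + (1 - ε) * (1 - ⟪n a, w₀'⟫)) := fun a ε => by
    rw [← one_sub_inner_smul_add_smul]
  have hsplit : ∀ ε, X (ε • w₀ + (1 - ε) • w₀') =
      f a₀ ε • n a₀ + ∑ a ∈ Finset.univ.erase a₀, f a ε • n a := fun ε => by
    rw [Finset.add_sum_erase _ (fun a => f a ε • n a) (Finset.mem_univ a₀), hX]
    rfl
  have hwall : ∀ a, 1 - ⟪n a, w₀'⟫ ∈ Set.Ico 0 (b a) := by
    intro a
    rcases eq_or_ne a a₀ with rfl | ha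
    · simpa [hw₀'₁] using hb a
    · exact ⟨(hw₀'₂ a ha).1.le, (hw₀'₂ a ha).2⟩
  have hblow : Tendsto (f a₀) (𝓝[>] 0) atTop := by
    have hp : 0 < 1 - ⟪n a₀, w₀⟫ := (hw₀ a₀).1
    have hlin : Tendsto (fun ε => ε * (1 - ⟪n a₀, w₀⟫)) (𝓝[>] 0) (𝓝[>] 0) :=
      (tendsto_iff_comap.2 (comap_mulLeft_nhdsGT_zero hp).ge).congr fun ε => mul_comm _ _
    refine ((tendsto_meanCurvatureCoeff_atTop (mo a₀) (hb a₀) (hme a₀)).comp hlin).congr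
      fun ε => ?_
    simp [hf, hw₀'₁]
  have hrest : ∀ a ∈ Finset.univ.erase a₀, ContinuousAt (f a) 0 := by
    intro a ha
    exact (continuousAt_meanCurvatureCoeff _ _ (hw₀'₂ a (Finset.ne_of_mem_erase ha))).comp_of_eq
      (by fun_prop) (by simp)
  have hR : Tendsto (fun ε => ∑ a ∈ Finset.univ.erase a₀, f a ε • n a) (𝓝[>] 0)
      (𝓝 (∑ a ∈ Finset.univ.erase a₀, f a 0 • n a)) :=
    tendsto_finsetSum _ fun a ha => ((hrest a ha).smul continuousAt_const).continuousWithinAt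
  refine ⟨fun ε hε a => ?_, ?_, ?_⟩
  · rw [one_sub_inner_smul_add_smul]
    exact mul_add_one_sub_mul_mem_Ioo hε (hw₀ a) (hwall a)
  · simpa only [hsplit] using hblow.norm_smul_add_atTop hR (hn a₀)
  · simpa only [hsplit] using hblow.normalize_smul_add hR (hn a₀)

/-- The mean curvature vector field `X` on the fundamental domain `C` blows up near the open
part of the wall `⟪n_{a₀}, ·⟫ = 1`, in the direction of the curvature normal `n_{a₀}`. -/
theorem stmt_5 {V : Type*} [NormedAddCommGroup V] [InnerProductSpace ℝ V]
    [FiniteDimensional ℝ V]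
    (k : ℕ) (hk : 1 ≤ k)
    (n : Fin k → V) (hn : ∀ a, n a ≠ 0)
    (b : Fin k → ℝ) (hb : ∀ a, 0 < b a)
    (me mo : Fin k → ℝ) (hme : ∀ a, 0 < me a) (hmo : ∀ a, 0 ≤ mo a)
    (C : Set V)
    (hC : C = {w : V | ∀ a, 0 < 1 - ⟪n a, w⟫ ∧ 1 - ⟪n a, w⟫ < b a})
    (X : V → V)
    (hX : ∀ w, X w = ∑ a, ((π / (2 * b a)) *
        ((me a + mo a) *
            (Real.cos (π * (1 - ⟪n a, w⟫) / b a) / Real.sin (π * (1 - ⟪n a, w⟫) / b a)) +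
          (me a - mo a) * (1 / Real.sin (π * (1 - ⟪n a, w⟫) / b a)))) • n a)
    (a₀ : Fin k) (w₀ : V) (hw₀ : w₀ ∈ C)
    (w₀' : V) (hw₀'₁ : ⟪n a₀, w₀'⟫ = 1)
    (hw₀'₂ : ∀ a, a ≠ a₀ → 0 < 1 - ⟪n a, w₀'⟫ ∧ 1 - ⟪n a, w₀'⟫ < b a) :
    (∀ ε ∈ Set.Ioo (0 : ℝ) 1, (ε • w₀ + (1 - ε) • w₀') ∈ C) ∧
    Tendsto (fun ε : ℝ => ‖X (ε • w₀ + (1 - ε) • w₀')‖) (𝓝[>] 0) atTop ∧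
    Tendsto (fun ε : ℝ => ‖X (ε • w₀ + (1 - ε) • w₀')‖⁻¹ • X (ε • w₀ + (1 - ε) • w₀'))
      (𝓝[>] 0) (𝓝 (‖n a₀‖⁻¹ • n a₀)) :=
  stmt_5_general k n hn b hb me mo hme C hC X hX a₀ w₀ hw₀ w₀' hw₀'₁ hw₀'₂
end

section
/- Let x₁, x₂, x₃ be real numbers with x₁ + x₂ + x₃ = 0, x₁ > x₂ > x₃ and x₁ − x₃ < π. Then the three equations cot(x₁−x₂) + cot(x₁−x₃) = 0, cot(x₂−x₁) + cot(x₂−x₃) = 0 and cot(x₃−x₁) + cot(x₃−x₂) = 0 hold simultaneously if and only if (x₁, x₂, x₃) = (π/3, 0, −π/3). -/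
open Real

lemma cot_eq_tan_pi_div_two_sub (x : ℝ) : Real.cot x = Real.tan (π / 2 - x) := by
  rw [Real.tan_pi_div_two_sub, Real.cot_eq_cos_div_sin, Real.tan_eq_sin_div_cos, inv_div]

lemma cot_injOn_aux {a b : ℝ} (ha : a ∈ Set.Ioo 0 π) (hb : b ∈ Set.Ioo 0 π)
    (h : Real.cot a = Real.cot b) : a = b := by
  rw [cot_eq_tan_pi_div_two_sub, cot_eq_tan_pi_div_two_sub] at h
  have := Real.tan_inj_of_lt_of_lt_pi_div_two (x := π / 2 - a) (y := π / 2 - b)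
    (by linarith [ha.2]) (by linarith [ha.1]) (by linarith [hb.2]) (by linarith [hb.1]) h
  linarith

lemma cot_neg' (x : ℝ) : Real.cot (-x) = -Real.cot x := by
  rw [Real.cot_eq_cos_div_sin, Real.cot_eq_cos_div_sin, Real.cos_neg, Real.sin_neg, div_neg]

lemma cot_pi_sub (x : ℝ) : Real.cot (π - x) = -Real.cot x := by
  rw [Real.cot_eq_cos_div_sin, Real.cot_eq_cos_div_sin, Real.cos_pi_sub, Real.sin_pi_sub,
    neg_div]

/-- For `x₁ + x₂ + x₃ = 0`, `x₁ > x₂ > x₃`, `x₁ - x₃ < π`, the system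
`∑_{j ≠ i} cot(x_i - x_j) = 0` (i = 1,2,3) holds iff `(x₁,x₂,x₃) = (π/3, 0, -π/3)`. -/
theorem stmt_6 (x₁ x₂ x₃ : ℝ) (hsum : x₁ + x₂ + x₃ = 0)
    (h12 : x₂ < x₁) (h23 : x₃ < x₂) (h13 : x₁ - x₃ < π) :
    (Real.cot (x₁ - x₂) + Real.cot (x₁ - x₃) = 0 ∧
     Real.cot (x₂ - x₁) + Real.cot (x₂ - x₃) = 0 ∧
     Real.cot (x₃ - x₁) + Real.cot (x₃ - x₂) = 0) ↔
    (x₁ = π / 3 ∧ x₂ = 0 ∧ x₃ = -(π / 3)) := by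
  have hpi := Real.pi_pos
  constructor
  · rintro ⟨e1, e2, e3⟩
    set a := x₁ - x₂ with ha
    set b := x₂ - x₃ with hb
    have hab : a + b < π := by simp [ha, hb]; linarith
    have ha0 : 0 < a := by linarith
    have hb0 : 0 < b := by linarith
    -- from e2 : cot (-a) + cot b = 0
    have hba : b = a := by
      apply cot_injOn_aux ⟨hb0, by linarith⟩ ⟨ha0, by linarith⟩
      have : x₂ - x₁ = -a := by ring
      rw [this, cot_neg' a] at e2
      linarith
    -- e1 : cot a + cot (a + b) = 0, with b = a
    have hx13 : x₁ - x₃ = a + b := by ring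
    rw [hx13, hba] at e1
    have h2a : Real.cot (a + a) = Real.cot (π - a) := by
      rw [cot_pi_sub]; linarith
    have haπ3 : a = π / 3 := by
      have := cot_injOn_aux (a := a + a) (b := π - a)
        ⟨by linarith, by linarith⟩ ⟨by linarith, by linarith⟩ h2a
      linarith
    refine ⟨by linarith [hba, haπ3], by linarith [hba, haπ3], by linarith [hba, haπ3]⟩
  · rintro ⟨h1, h2, h3⟩
    subst h1 h2 h3
    have k1 : (π/3 : ℝ) - -(π/3) = π - π/3 := by ring
    have k2 : (0 : ℝ) - π/3 = -(π/3) := by ring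
    have k3 : (0 : ℝ) - -(π/3) = π/3 := by ring
    have k4 : -(π/3) - π/3 = -(π - π/3) := by ring
    have k5 : -(π/3) - (0:ℝ) = -(π/3) := by ring
    refine ⟨?_, ?_, ?_⟩ <;>
      simp only [sub_zero, k1, k2, k3, k4, k5, cot_pi_sub, cot_neg'] <;> ring
end

section
/- Let x₁, x₂, x₃ be real numbers with x₁ + x₂ + x₃ = 0, x₁ > x₂ > x₃ and x₁ − x₃ < π/2. Then the three equations cot(2(x₁−x₂)) + cot(2(x₁−x₃)) = 0, cot(2(x₂−x₁)) + cot(2(x₂−x₃)) = 0 and cot(2(x₃−x₁)) + cot(2(x₃−x₂)) = 0 hold simultaneously if and only if (x₁, x₂, x₃) = (π/6, 0, −π/6). -/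
/-!
Since `cot u + cot v = sin (u + v) / (sin u * sin v)`, for `u, v ∈ (0, π)` the sum vanishes
exactly when `u + v = π`. Shifting the negative arguments `2 (x_i - x_j)`, `i > j`, by the period
`π` puts all six arguments in `(0, π)`, so the system becomes three linear equations in
`x₁, x₂, x₃`, whose unique solution with `x₁ + x₂ + x₃ = 0` is `(π/6, 0, -π/6)`.
-/

open Real

namespace Real

theorem cot_periodic : Function.Periodic cot π := fun x => by
  simp only [cot_eq_cos_div_sin, cos_add_pi, sin_add_pi, neg_div_neg_eq]

theorem cot_add_cot {x y : ℝ} (hx : sin x ≠ 0) (hy : sin y ≠ 0) :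
    cot x + cot y = sin (x + y) / (sin x * sin y) := by
  rw [cot_eq_cos_div_sin, cot_eq_cos_div_sin, sin_add]
  field_simp
  ring

theorem cot_add_cot_eq_zero_iff {x y : ℝ} (hx₀ : 0 < x) (hxπ : x < π) (hy₀ : 0 < y)
    (hyπ : y < π) : cot x + cot y = 0 ↔ x + y = π := by
  have hsx := sin_pos_of_pos_of_lt_pi hx₀ hxπ
  have hsy := sin_pos_of_pos_of_lt_pi hy₀ hyπ
  rw [cot_add_cot hsx.ne' hsy.ne', div_eq_zero_iff, or_iff_left (mul_pos hsx hsy).ne',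
    ← neg_eq_zero, ← sin_sub_pi, sin_eq_zero_iff_of_lt_of_lt (by linarith) (by linarith), sub_eq_zero]

end Real

/-- For `x₁ + x₂ + x₃ = 0`, `x₁ > x₂ > x₃`, `x₁ - x₃ < π/2`, the system
`∑_{j ≠ i} cot(2(x_i - x_j)) = 0` (i = 1,2,3) holds iff `(x₁,x₂,x₃) = (π/6, 0, -π/6)`. -/
theorem stmt_8 (x₁ x₂ x₃ : ℝ) (hsum : x₁ + x₂ + x₃ = 0)
    (h12 : x₂ < x₁) (h23 : x₃ < x₂) (h13 : x₁ - x₃ < π / 2) :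
    (Real.cot (2 * (x₁ - x₂)) + Real.cot (2 * (x₁ - x₃)) = 0 ∧
     Real.cot (2 * (x₂ - x₁)) + Real.cot (2 * (x₂ - x₃)) = 0 ∧
     Real.cot (2 * (x₃ - x₁)) + Real.cot (2 * (x₃ - x₂)) = 0) ↔
    (x₁ = π / 6 ∧ x₂ = 0 ∧ x₃ = -(π / 6)) := by
  have hπ := pi_pos
  rw [← cot_periodic (2 * (x₂ - x₁)), ← cot_periodic (2 * (x₃ - x₁)),
    ← cot_periodic (2 * (x₃ - x₂)),
    cot_add_cot_eq_zero_iff (by linarith) (by linarith) (by linarith) (by linarith),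
    cot_add_cot_eq_zero_iff (by linarith) (by linarith) (by linarith) (by linarith),
    cot_add_cot_eq_zero_iff (by linarith) (by linarith) (by linarith) (by linarith)]
  constructor
  · rintro ⟨h₁, h₂, -⟩
    refine ⟨by linarith, by linarith, by linarith⟩
  · rintro ⟨rfl, rfl, rfl⟩
    refine ⟨by ring, by ring, by ring⟩
end

section
/- Let q be an integer with q > 2. Then there exists exactly one pair of real numbers (x₁, x₂) with 0 < x₂ < x₁ < π/2 satisfying the two equations cot(x₁−x₂) + cot(x₁+x₂) + (q−2)·cot x₁ + cot 2x₁ = 0 and cot(x₂−x₁) + cot(x₁+x₂) + (q−2)·cot x₂ + cot 2x₂ = 0. -/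
/-!
Put `c = q - 2`, `a = cot x₁`, `b = cot x₂`, so that `0 < a < b`. Clearing denominators with the
addition formulas for `cot`, the two equations become polynomial equations in `A = a²`, `B = b²`.
Their sum factors as `(B - A) ((2c + 1)(A + B) - 6)` and their difference reads
`(2c + 3)(B - A)² = 2(A + B)² + 4(A + B)`. Hence `A + B` and `B - A > 0` are determined by `c`,
so are `a` and `b`, and `cot` is injective on `(0, π/2)`.
-/

open Real

namespace Real

lemma cot_add_mul_add_cot {x y : ℝ} (hx : sin x ≠ 0) (hy : sin y ≠ 0)
    (hxy : sin (x + y) ≠ 0) :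
    cot (x + y) * (cot x + cot y) = cot x * cot y - 1 := by
  simp only [cot_eq_cos_div_sin]
  field_simp
  rw [sin_add, cos_add]
  ring

lemma cot_sub_mul_sub_cot {x y : ℝ} (hx : sin x ≠ 0) (hy : sin y ≠ 0)
    (hxy : sin (x - y) ≠ 0) :
    cot (x - y) * (cot y - cot x) = cot x * cot y + 1 := by
  have h := cot_add_mul_add_cot hx (by rwa [sin_neg, neg_ne_zero]) (sub_eq_add_neg x y ▸ hxy)
  rw [← sub_eq_add_neg, cot_eq_cos_div_sin (-y), cos_neg, sin_neg, div_neg,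
    ← cot_eq_cos_div_sin] at h
  linear_combination -h

lemma cot_two_mul_mul {x : ℝ} (hx : sin x ≠ 0) (h2x : sin (2 * x) ≠ 0) :
    cot (2 * x) * (2 * cot x) = cot x ^ 2 - 1 := by
  rw [two_mul] at h2x ⊢
  linear_combination cot_add_mul_add_cot hx hx h2x

lemma cot_eq_inv_tan (x : ℝ) : cot x = (tan x)⁻¹ := by
  rw [← cot_inv_eq_tan, inv_inv]

lemma cot_pos_of_pos_of_lt_pi_div_two {x : ℝ} (hx₀ : 0 < x) (hx : x < π / 2) : 0 < cot x := by
  rw [cot_eq_inv_tan]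
  exact inv_pos.2 (tan_pos_of_pos_of_lt_pi_div_two hx₀ hx)

lemma cot_lt_cot_of_lt_of_pos {x y : ℝ} (hy : 0 < y) (hyx : y < x) (hx : x < π / 2) :
    cot x < cot y := by
  rw [cot_eq_inv_tan, cot_eq_inv_tan]
  exact inv_strictAnti₀ (tan_pos_of_pos_of_lt_pi_div_two hy (hyx.trans hx))
    (tan_lt_tan_of_nonneg_of_lt_pi_div_two hy.le hx hyx)

lemma cot_eq_iff_eq_arctan_inv {x a : ℝ} (hx₀ : 0 < x) (hx : x < π / 2) :
    cot x = a ↔ x = arctan a⁻¹ := by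
  rw [← inv_inj, cot_inv_eq_tan]
  constructor
  · intro h
    rw [← h, arctan_tan (by linarith [pi_pos]) hx]
  · rintro rfl
    exact tan_arctan _

end Real

def cotSystem (c x y : ℝ) : Prop :=
  cot (x - y) + cot (x + y) + c * cot x + cot (2 * x) = 0 ∧
    cot (y - x) + cot (x + y) + c * cot y + cot (2 * y) = 0

def clearedSystem (c A B : ℝ) : Prop :=
  4 * A * (B + 1) + 2 * c * A * (B - A) + (A - 1) * (B - A) = 0 ∧
    -4 * B * (A + 1) + 2 * c * B * (B - A) + (B - 1) * (B - A) = 0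

lemma cotSystem_iff_clearedSystem {c x y : ℝ} (hy : 0 < y) (hyx : y < x) (hx : x < π / 2) :
    cotSystem c x y ↔ clearedSystem c (cot x ^ 2) (cot y ^ 2) := by
  have hπ := pi_pos
  have sin_ne {z : ℝ} (hz₀ : 0 < z) (hz : z < π) : sin z ≠ 0 :=
    (sin_pos_of_pos_of_lt_pi hz₀ hz).ne'
  have hsx := sin_ne (hy.trans hyx) (by linarith)
  have hsy := sin_ne hy (by linarith)
  have hsxy : sin (x - y) ≠ 0 := sin_ne (by linarith) (by linarith)
  have h_add := cot_add_mul_add_cot hsx hsy (sin_ne (by linarith) (by linarith))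
  have h_sub := cot_sub_mul_sub_cot hsx hsy hsxy
  have h_sub' := cot_sub_mul_sub_cot hsy hsx (by rwa [← neg_sub, sin_neg, neg_ne_zero])
  have h_two_x := cot_two_mul_mul hsx (sin_ne (by linarith) (by linarith))
  have h_two_y := cot_two_mul_mul hsy (sin_ne (by linarith) (by linarith))
  set a := cot x
  set b := cot y
  have ha : 0 < a := cot_pos_of_pos_of_lt_pi_div_two (hy.trans hyx) hx
  have hab : 0 < b - a := sub_pos.2 (cot_lt_cot_of_lt_of_pos hy hyx hx)
  have hb : 0 < b := by linarith
  have key₁ : (cot (x - y) + cot (x + y) + c * a + cot (2 * x)) * (2 * a * (b - a) * (a + b)) =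
      4 * a ^ 2 * (b ^ 2 + 1) + 2 * c * a ^ 2 * (b ^ 2 - a ^ 2) +
        (a ^ 2 - 1) * (b ^ 2 - a ^ 2) := by
    linear_combination
      2 * a * (a + b) * h_sub + 2 * a * (b - a) * h_add + (b ^ 2 - a ^ 2) * h_two_x
  have key₂ : (cot (y - x) + cot (x + y) + c * b + cot (2 * y)) * (2 * b * (b - a) * (a + b)) =
      -4 * b ^ 2 * (a ^ 2 + 1) + 2 * c * b ^ 2 * (b ^ 2 - a ^ 2) +
        (b ^ 2 - 1) * (b ^ 2 - a ^ 2) := by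
    linear_combination
      -2 * b * (a + b) * h_sub' + 2 * b * (b - a) * h_add + (b ^ 2 - a ^ 2) * h_two_y
  unfold cotSystem clearedSystem
  rw [← key₁, ← key₂, mul_eq_zero, or_iff_left (by positivity), mul_eq_zero,
    or_iff_left (by positivity)]

lemma clearedSystem_iff_of_ne {c A B : ℝ} (hAB : A ≠ B) :
    clearedSystem c A B ↔
      (2 * c + 1) * (A + B) = 6 ∧ (2 * c + 3) * (B - A) ^ 2 = 2 * (A + B) ^ 2 + 4 * (A + B) := by
  constructor
  · rintro ⟨h₁, h₂⟩
    have hsum : (B - A) * ((2 * c + 1) * (A + B) - 6) = 0 := by linear_combination h₁ + h₂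
    refine ⟨?_, by linear_combination h₂ - h₁⟩
    linarith [(mul_eq_zero.1 hsum).resolve_left (sub_ne_zero.2 hAB.symm)]
  · rintro ⟨h₁, h₂⟩
    constructor
    · linear_combination (B - A) / 2 * h₁ - h₂ / 2
    · linear_combination (B - A) / 2 * h₁ + h₂ / 2

noncomputable def cotSqSum (c : ℝ) : ℝ := 6 / (2 * c + 1)

noncomputable def cotSqDiff (c : ℝ) : ℝ :=
  √((2 * cotSqSum c ^ 2 + 4 * cotSqSum c) / (2 * c + 3))

noncomputable def solution (c : ℝ) : ℝ × ℝ :=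
  (arctan (√((cotSqSum c - cotSqDiff c) / 2))⁻¹,
    arctan (√((cotSqSum c + cotSqDiff c) / 2))⁻¹)

lemma cotSqSum_pos {c : ℝ} (hc : -1 / 2 < c) : 0 < cotSqSum c :=
  div_pos (by norm_num) (by linarith)

lemma cotSqDiff_pos {c : ℝ} (hc : -1 / 2 < c) : 0 < cotSqDiff c := by
  have := cotSqSum_pos hc
  exact sqrt_pos.2 (div_pos (by positivity) (by linarith))

lemma cotSqDiff_lt_cotSqSum {c : ℝ} (hc : -1 / 2 < c) : cotSqDiff c < cotSqSum c := by
  have hS := cotSqSum_pos hc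
  have hS₆ : (2 * c + 1) * cotSqSum c = 6 := mul_div_cancel₀ _ (by linarith)
  rw [cotSqDiff, sqrt_lt' hS, div_lt_iff₀ (by linarith)]
  nlinarith

lemma eq_cotSqSum_and_eq_cotSqDiff_iff {c S D : ℝ} (hc : -1 / 2 < c) (hD : 0 < D) :
    S = cotSqSum c ∧ D = cotSqDiff c ↔
      (2 * c + 1) * S = 6 ∧ (2 * c + 3) * D ^ 2 = 2 * S ^ 2 + 4 * S := by
  have h₁ : 2 * c + 1 ≠ 0 := by linarith
  have h₃ : 2 * c + 3 ≠ 0 := by linarith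
  have hS_iff : (2 * c + 1) * S = 6 ↔ S = cotSqSum c := by
    rw [cotSqSum, eq_div_iff h₁, mul_comm]
  rw [hS_iff]
  refine and_congr_right fun hS => ?_
  rw [cotSqDiff, ← hS, eq_comm (a := D), sqrt_eq_iff_mul_self_eq_of_pos hD, ← sq,
    eq_div_iff h₃, mul_comm, eq_comm]

lemma solution_bounds {c : ℝ} (hc : -1 / 2 < c) :
    0 < (solution c).2 ∧ (solution c).2 < (solution c).1 ∧ (solution c).1 < π / 2 := by
  have hD := cotSqDiff_pos hc
  have hDS := cotSqDiff_lt_cotSqSum hc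
  have ha : 0 < √((cotSqSum c - cotSqDiff c) / 2) := sqrt_pos.2 (by linarith)
  have hab : √((cotSqSum c - cotSqDiff c) / 2) < √((cotSqSum c + cotSqDiff c) / 2) :=
    sqrt_lt_sqrt (by linarith) (by linarith)
  exact ⟨arctan_pos.2 (inv_pos.2 (ha.trans hab)), arctan_strictMono (inv_strictAnti₀ ha hab),
    arctan_lt_pi_div_two _⟩

lemma cotSystem_iff_eq_solution {c x y : ℝ} (hc : -1 / 2 < c) (hy : 0 < y) (hyx : y < x)
    (hx : x < π / 2) :
    cotSystem c x y ↔ (x, y) = solution c := by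
  have ha : 0 < cot x := cot_pos_of_pos_of_lt_pi_div_two (hy.trans hyx) hx
  have hab : cot x < cot y := cot_lt_cot_of_lt_of_pos hy hyx hx
  have hb : 0 < cot y := ha.trans hab
  have hab₂ : cot x ^ 2 < cot y ^ 2 := by gcongr
  rw [cotSystem_iff_clearedSystem hy hyx hx, clearedSystem_iff_of_ne hab₂.ne,
    ← eq_cotSqSum_and_eq_cotSqDiff_iff hc (by linarith), solution, Prod.mk.injEq,
    ← cot_eq_iff_eq_arctan_inv (hy.trans hyx) hx, ← cot_eq_iff_eq_arctan_inv hy (hyx.trans hx),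
    eq_comm (a := cot x), eq_comm (a := cot y),
    sqrt_eq_iff_mul_self_eq_of_pos ha, sqrt_eq_iff_mul_self_eq_of_pos hb]
  constructor <;> rintro ⟨h₁, h₂⟩ <;> constructor <;> linarith

/-- For every integer `q > 2` there is exactly one pair `(x₁, x₂)` with
`0 < x₂ < x₁ < π/2` satisfying
`cot(x₁-x₂) + cot(x₁+x₂) + (q-2) cot x₁ + cot 2x₁ = 0` and
`cot(x₂-x₁) + cot(x₁+x₂) + (q-2) cot x₂ + cot 2x₂ = 0`. -/
theorem stmt_9 (q : ℤ) (hq : 2 < q) :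
    ∃! p : ℝ × ℝ, (0 < p.2 ∧ p.2 < p.1 ∧ p.1 < π / 2) ∧
      Real.cot (p.1 - p.2) + Real.cot (p.1 + p.2) + ((q : ℝ) - 2) * Real.cot p.1 +
        Real.cot (2 * p.1) = 0 ∧
      Real.cot (p.2 - p.1) + Real.cot (p.1 + p.2) + ((q : ℝ) - 2) * Real.cot p.2 +
        Real.cot (2 * p.2) = 0 := by
  have hc : -1 / 2 < (q : ℝ) - 2 := by
    have : (3 : ℝ) ≤ q := by exact_mod_cast hq
    linarith
  obtain ⟨hy, hyx, hx⟩ := solution_bounds hc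
  refine ⟨solution _, ⟨⟨hy, hyx, hx⟩, ?_⟩, ?_⟩
  · exact (cotSystem_iff_eq_solution hc hy hyx hx).2 rfl
  · rintro ⟨x, y⟩ ⟨⟨hy, hyx, hx⟩, h⟩
    exact (cotSystem_iff_eq_solution hc hy hyx hx).1 h
end

section
/- There exists exactly one pair of real numbers (x₁, x₂) with 0 < x₂ < x₁ < π/2 satisfying the two equations cot(x₁−x₂) + cot(x₁+x₂) + cot 2x₁ = 0 and cot(x₂−x₁) + cot(x₁+x₂) + cot 2x₂ = 0. -/
/-!
With `s = x₁ + x₂` and `t = x₁ - x₂` the system reads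
`cot t + cot s + cot (s + t) = 0` and `-cot t + cot s + cot (s - t) = 0`.
Adding the two equations gives `2 cot s + cot (s + t) + cot (s - t) = 0`, and since
`cot (s + t) + cot (s - t) = sin 2s / (sin (s + t) sin (s - t))`, the left-hand side is
`cos s` times a positive quantity; hence `s = π/2`. Then `cot (s + t) = -tan t`, so the first
equation becomes `cot t = tan t`, i.e. `cos 2t = 0`, and `t = π/4`.
The unique solution is therefore `(x₁, x₂) = (3π/8, π/8)`.
-/

open Real

namespace Real

lemma cot_neg (x : ℝ) : cot (-x) = -cot x := by
  rw [cot_eq_cos_div_sin, cot_eq_cos_div_sin, cos_neg, sin_neg, div_neg]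

lemma cot_pi_div_two : cot (π / 2) = 0 := by
  rw [cot_eq_cos_div_sin, cos_pi_div_two, zero_div]

lemma cot_pi_div_four : cot (π / 4) = 1 := by
  rw [← tan_inv_eq_cot, tan_pi_div_four, inv_one]

lemma cot_add_pi_div_two_s12 (x : ℝ) : cot (x + π / 2) = -tan x := by
  rw [cot_eq_cos_div_sin, tan_eq_sin_div_cos, cos_add_pi_div_two, sin_add_pi_div_two, neg_div]

lemma cot_add_cot_s12 {a b : ℝ} (ha : sin a ≠ 0) (hb : sin b ≠ 0) :
    cot a + cot b = sin (a + b) / (sin a * sin b) := by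
  rw [cot_eq_cos_div_sin, cot_eq_cos_div_sin, sin_add]
  field_simp
  ring

lemma cos_eq_zero_of_two_mul_cot_add_cot_add_cot_sub {s t : ℝ} (hs : 0 < sin s)
    (hsp : 0 < sin (s + t)) (hsm : 0 < sin (s - t))
    (h : 2 * cot s + cot (s + t) + cot (s - t) = 0) : cos s = 0 := by
  have hsum : cot (s + t) + cot (s - t) = 2 * sin s * cos s / (sin (s + t) * sin (s - t)) := by
    rw [cot_add_cot_s12 hsp.ne' hsm.ne', show s + t + (s - t) = 2 * s by ring, sin_two_mul]
  have hfactor : cos s * (2 / sin s + 2 * sin s / (sin (s + t) * sin (s - t))) = 0 := by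
    rw [← h, add_assoc, hsum, cot_eq_cos_div_sin]
    ring
  have hpos : 0 < 2 / sin s + 2 * sin s / (sin (s + t) * sin (s - t)) := by positivity
  exact (mul_eq_zero.mp hfactor).resolve_right hpos.ne'

lemma eq_pi_div_two_of_cos_eq_zero {x : ℝ} (h₀ : 0 ≤ x) (hπ : x ≤ π) (h : cos x = 0) :
    x = π / 2 :=
  injOn_cos ⟨h₀, hπ⟩ ⟨by positivity, by linarith [pi_pos]⟩ (h.trans cos_pi_div_two.symm)

lemma eq_pi_div_four_of_cot_eq_tan {t : ℝ} (h₀ : 0 < t) (hπ : t < π / 2) (h : cot t = tan t) :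
    t = π / 4 := by
  have hsin : sin t ≠ 0 := (sin_pos_of_pos_of_lt_pi h₀ (by linarith [pi_pos])).ne'
  have hcos : cos t ≠ 0 := (cos_pos_of_mem_Ioo ⟨by linarith, hπ⟩).ne'
  have hcos2 : cos (2 * t) = 0 := by
    rw [cot_eq_cos_div_sin, tan_eq_sin_div_cos, div_eq_div_iff hsin hcos] at h
    rw [cos_two_mul']
    linear_combination h
  linarith [eq_pi_div_two_of_cos_eq_zero (by linarith) (by linarith) hcos2]

end Real

def CotSystem (s t : ℝ) : Prop :=
  cot t + cot s + cot (s + t) = 0 ∧ -cot t + cot s + cot (s - t) = 0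

lemma cotSystem_add_sub_iff (x₁ x₂ : ℝ) :
    CotSystem (x₁ + x₂) (x₁ - x₂) ↔
      cot (x₁ - x₂) + cot (x₁ + x₂) + cot (2 * x₁) = 0 ∧
        cot (x₂ - x₁) + cot (x₁ + x₂) + cot (2 * x₂) = 0 := by
  rw [CotSystem, ← neg_sub x₁ x₂, cot_neg, show x₁ + x₂ + (x₁ - x₂) = 2 * x₁ by ring,
    show x₁ + x₂ - (x₁ - x₂) = 2 * x₂ by ring]

lemma cotSystem_pi_div_two_pi_div_four : CotSystem (π / 2) (π / 4) := by
  rw [CotSystem, add_comm (π / 2), cot_add_pi_div_two_s12, show π / 2 - π / 4 = π / 4 by ring,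
    cot_pi_div_two, cot_pi_div_four, tan_pi_div_four]
  norm_num

lemma CotSystem.eq {s t : ℝ} (ht : 0 < t) (hts : t < s) (hst : s + t < π)
    (h : CotSystem s t) : s = π / 2 ∧ t = π / 4 := by
  obtain ⟨h₁, h₂⟩ := h
  have hs : s = π / 2 := by
    refine eq_pi_div_two_of_cos_eq_zero (by linarith) (by linarith) ?_
    refine cos_eq_zero_of_two_mul_cot_add_cot_add_cot_sub
      (sin_pos_of_pos_of_lt_pi ?_ ?_) (sin_pos_of_pos_of_lt_pi ?_ hst)
      (sin_pos_of_pos_of_lt_pi ?_ ?_) ?_ <;> linarith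
  subst hs
  refine ⟨rfl, eq_pi_div_four_of_cot_eq_tan ht (by linarith) ?_⟩
  rw [cot_pi_div_two, add_comm (π / 2), cot_add_pi_div_two_s12] at h₁
  linarith

/-- There is exactly one pair `(x₁, x₂)` with `0 < x₂ < x₁ < π/2` satisfying
`cot(x₁-x₂) + cot(x₁+x₂) + cot 2x₁ = 0` and `cot(x₂-x₁) + cot(x₁+x₂) + cot 2x₂ = 0`. -/
theorem stmt_12 :
    ∃! p : ℝ × ℝ, (0 < p.2 ∧ p.2 < p.1 ∧ p.1 < π / 2) ∧
      Real.cot (p.1 - p.2) + Real.cot (p.1 + p.2) + Real.cot (2 * p.1) = 0 ∧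
      Real.cot (p.2 - p.1) + Real.cot (p.1 + p.2) + Real.cot (2 * p.2) = 0 := by
  have hπ := pi_pos
  refine ⟨(3 * π / 8, π / 8), ⟨⟨by positivity, by linarith, by linarith⟩, ?_⟩, ?_⟩
  · rw [← cotSystem_add_sub_iff]
    convert cotSystem_pi_div_two_pi_div_four using 1 <;> ring
  · rintro ⟨x₁, x₂⟩ ⟨⟨h₀, h₁₂, h₁⟩, h⟩
    obtain ⟨hs, ht⟩ := ((cotSystem_add_sub_iff x₁ x₂).mpr h).eq (by linarith) (by linarith)
      (by linarith)
    rw [Prod.mk.injEq]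
    constructor <;> linarith
end

section
/- Let q be an integer with q > 2. Then there exists exactly one pair of real numbers (x₁, x₂) with 0 < x₂ < x₁ < π/4 satisfying the two equations tan 2x₁ − (q−2)·cot 2x₁ − cot(2(x₁−x₂)) − cot(2(x₁+x₂)) = 0 and tan 2x₂ − (q−2)·cot 2x₂ − cot(2(x₂−x₁)) − cot(2(x₁+x₂)) = 0. -/
open Real

/-!
Put `a = 2 x₁`, `b = 2 x₂`, `c = cos (a - b)`, `d = cos (a + b)`. The sum and the difference of
the two equations only involve `tan a ± tan b` and `cot a ± cot b`, hence `sin (a ± b)`,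
`2 cos a cos b = c + d` and `2 sin a sin b = c - d`; multiplying through by `sin (a ± b)` turns
the system into two rational equations in `c, d`, equivalent to
`q (q + 1) (c + d)² = 8` and `(q + 1) c d = 3 - q`.
On the domain `d < c` and `0 < c + d`, so `c, d` are the larger and the smaller root of a fixed
quadratic, and `(x₁, x₂)` is recovered from `a - b = arccos c`, `a + b = arccos d`.
-/

section
variable {a b : ℝ} (k : ℝ)

lemma tan_add_tan_sub_mul_cot_add_cot (hca : cos a ≠ 0) (hcb : cos b ≠ 0) (hsa : sin a ≠ 0)
    (hsb : sin b ≠ 0) :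
    tan a + tan b - k * (cot a + cot b) =
      2 * sin (a + b) * (1 / (cos (a - b) + cos (a + b)) - k / (cos (a - b) - cos (a + b))) := by
  rw [← two_mul_cos_mul_cos, ← two_mul_sin_mul_sin, tan_eq_sin_div_cos, tan_eq_sin_div_cos,
    cot_eq_cos_div_sin, cot_eq_cos_div_sin, sin_add]
  field_simp
  ring

lemma tan_sub_tan_sub_mul_cot_sub_cot (hca : cos a ≠ 0) (hcb : cos b ≠ 0) (hsa : sin a ≠ 0)
    (hsb : sin b ≠ 0) :
    tan a - tan b - k * (cot a - cot b) =
      2 * sin (a - b) * (1 / (cos (a - b) + cos (a + b)) + k / (cos (a - b) - cos (a + b))) := by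
  rw [← two_mul_cos_mul_cos, ← two_mul_sin_mul_sin, tan_eq_sin_div_cos, tan_eq_sin_div_cos,
    cot_eq_cos_div_sin, cot_eq_cos_div_sin, sin_sub]
  field_simp
  ring

end

lemma sin_mul_sub_cot_eq_zero_iff {x : ℝ} (y : ℝ) (hx : sin x ≠ 0) :
    sin x * y - cot x = 0 ↔ (1 - cos x ^ 2) * y = cos x := by
  rw [cot_eq_cos_div_sin, ← sin_sq, sub_eq_zero, sq, mul_assoc]
  constructor <;> intro h
  · rw [h, mul_div_cancel₀ _ hx]
  · rw [eq_div_iff hx, mul_comm, ← h]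

lemma cos_add_cos_pos {u v : ℝ} (h₁ : |u + v| < π) (h₂ : |u - v| < π) : 0 < cos u + cos v := by
  rw [cos_add_cos]
  have hpos : ∀ x, |x| < π → 0 < cos (x / 2) := fun x hx ↦
    cos_pos_of_mem_Ioo ⟨by linarith [neg_abs_le x], by linarith [le_abs_self x]⟩
  exact mul_pos (mul_pos two_pos (hpos _ h₁)) (hpos _ h₂)

lemma tan_cot_system_iff {k a b : ℝ} (hb : 0 < b) (hba : b < a) (ha : a < π / 2) :
    (tan a - k * cot a - cot (a - b) - cot (a + b) = 0 ∧
      tan b - k * cot b - cot (b - a) - cot (a + b) = 0) ↔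
    ((1 - cos (a + b) ^ 2) * (1 / (cos (a - b) + cos (a + b)) - k / (cos (a - b) - cos (a + b))) =
        cos (a + b) ∧
      (1 - cos (a - b) ^ 2) * (1 / (cos (a - b) + cos (a + b)) + k / (cos (a - b) - cos (a + b))) =
        cos (a - b)) := by
  have hcos : ∀ x, 0 < x → x < π / 2 → cos x ≠ 0 := fun x h₀ h₁ ↦
    (cos_pos_of_mem_Ioo ⟨by linarith, h₁⟩).ne'
  have hsin : ∀ x, 0 < x → x < π → sin x ≠ 0 := fun x h₀ h₁ ↦ (sin_pos_of_pos_of_lt_pi h₀ h₁).ne'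
  have hca := hcos a (by linarith) ha
  have hcb := hcos b hb (by linarith)
  have hsa := hsin a (by linarith) (by linarith)
  have hsb := hsin b hb (by linarith)
  have hcot : cot (b - a) = -cot (a - b) := by
    rw [← neg_sub, cot_eq_cos_div_sin, cot_eq_cos_div_sin, cos_neg, sin_neg, div_neg]
  have hadd := tan_add_tan_sub_mul_cot_add_cot k hca hcb hsa hsb
  have hsub := tan_sub_tan_sub_mul_cot_sub_cot k hca hcb hsa hsb
  rw [← sin_mul_sub_cot_eq_zero_iff _ (hsin _ (by linarith) (by linarith)),
    ← sin_mul_sub_cot_eq_zero_iff _ (hsin _ (by linarith) (by linarith)), hcot]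
  constructor
  · rintro ⟨h₁, h₂⟩
    constructor
    · linear_combination (h₁ + h₂ - hadd) / 2
    · linear_combination (h₁ - h₂ - hsub) / 2
  · rintro ⟨h₁, h₂⟩
    constructor
    · linear_combination h₁ + h₂ + (hadd + hsub) / 2
    · linear_combination h₁ - h₂ + (hadd - hsub) / 2

lemma rational_system_iff {Q c d : ℝ} (hQ : Q + 1 ≠ 0) (hp : c + d ≠ 0) (hm : c - d ≠ 0) :
    ((1 - d ^ 2) * (1 / (c + d) - (Q - 2) / (c - d)) = d ∧
      (1 - c ^ 2) * (1 / (c + d) + (Q - 2) / (c - d)) = c) ↔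
      Q * (Q + 1) * (c + d) ^ 2 = 8 ∧ (Q + 1) * (c * d) = 3 - Q := by
  set D := Q * (c + d) ^ 2 - 2 * (c * d) - 2
  set S := Q * (c + d) ^ 2 - (2 * Q + 4) * (c * d) - (2 * Q - 4)
  have h₁ : (1 - d ^ 2) * (1 / (c + d) - (Q - 2) / (c - d)) = d ↔
      (1 - d ^ 2) * ((c - d) - (Q - 2) * (c + d)) = d * (c ^ 2 - d ^ 2) := by
    rw [div_sub_div _ _ hp hm, mul_div_assoc', div_eq_iff (mul_ne_zero hp hm)]
    constructor <;> intro h <;> linear_combination h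
  have h₂ : (1 - c ^ 2) * (1 / (c + d) + (Q - 2) / (c - d)) = c ↔
      (1 - c ^ 2) * ((c - d) + (Q - 2) * (c + d)) = c * (c ^ 2 - d ^ 2) := by
    rw [div_add_div _ _ hp hm, mul_div_assoc', div_eq_iff (mul_ne_zero hp hm)]
    constructor <;> intro h <;> linear_combination h
  rw [h₁, h₂]
  calc _ ↔ (c - d) * D = 0 ∧ (c + d) * S = 0 := by
        constructor <;> rintro ⟨h, h'⟩
        · constructor
          · linear_combination -(h + h')
          · linear_combination h - h'
        · constructor
          · linear_combination (h' - h) / 2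
          · linear_combination -(h + h') / 2
    _ ↔ D = 0 ∧ S = 0 := by simp only [mul_eq_zero, hp, hm, false_or]
    _ ↔ _ := by
        constructor <;> rintro ⟨h, h'⟩
        · constructor
          · linear_combination (Q + 2) * h - h'
          · linear_combination (h - h') / 2
        · refine ⟨mul_left_cancel₀ hQ ?_, mul_left_cancel₀ hQ ?_⟩
          · linear_combination h - 2 * h'
          · linear_combination h - (2 * Q + 4) * h'

lemma eq_and_eq_of_add_eq_of_mul_eq {s t s' t' : ℝ} (h : t < s) (h' : t' < s')
    (hadd : s + t = s' + t') (hmul : s * t = s' * t') : s = s' ∧ t = t' := by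
  have hsub : s - t = s' - t' := by
    refine (pow_left_inj₀ (sub_nonneg.2 h.le) (sub_nonneg.2 h'.le) two_ne_zero).1 ?_
    linear_combination (s + t + s' + t') * hadd - 4 * hmul
  constructor <;> linarith

lemma exists_lt_add_eq_mul_eq {σ p : ℝ} (h : 4 * p < σ ^ 2) :
    ∃ s t : ℝ, t < s ∧ s + t = σ ∧ s * t = p := by
  have hδ : 0 < σ ^ 2 - 4 * p := by linarith
  refine ⟨(σ + √(σ ^ 2 - 4 * p)) / 2, (σ - √(σ ^ 2 - 4 * p)) / 2, ?_, by ring, ?_⟩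
  · linarith [sqrt_pos.2 hδ]
  · linear_combination (-1 / 4 : ℝ) * sq_sqrt hδ.le

lemma system_iff_cos_eq {Q x₁ x₂ c d : ℝ} (hQ : 0 < Q) (h₀ : 0 < x₂) (h₂₁ : x₂ < x₁)
    (h₁ : x₁ < π / 4) (hdc : d < c) (hcd : 0 < c + d) (hsq : Q * (Q + 1) * (c + d) ^ 2 = 8)
    (hmul : (Q + 1) * (c * d) = 3 - Q) :
    (tan (2 * x₁) - (Q - 2) * cot (2 * x₁) - cot (2 * (x₁ - x₂)) - cot (2 * (x₁ + x₂)) = 0 ∧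
      tan (2 * x₂) - (Q - 2) * cot (2 * x₂) - cot (2 * (x₂ - x₁)) - cot (2 * (x₁ + x₂)) = 0) ↔
    cos (2 * (x₁ - x₂)) = c ∧ cos (2 * (x₁ + x₂)) = d := by
  have hlt : cos (2 * (x₁ + x₂)) < cos (2 * (x₁ - x₂)) :=
    cos_lt_cos_of_nonneg_of_le_pi (by linarith) (by linarith) (by linarith)
  have hpos : 0 < cos (2 * (x₁ - x₂)) + cos (2 * (x₁ + x₂)) :=
    cos_add_cos_pos (by rw [abs_lt]; constructor <;> linarith)
      (by rw [abs_lt]; constructor <;> linarith)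
  have hQ₁ : Q + 1 ≠ 0 := by positivity
  simp only [mul_sub, mul_add] at hlt hpos ⊢
  rw [tan_cot_system_iff (by linarith) (by linarith) (by linarith),
    rational_system_iff hQ₁ hpos.ne' (sub_pos.2 hlt).ne']
  constructor
  · rintro ⟨hsq', hmul'⟩
    refine eq_and_eq_of_add_eq_of_mul_eq hlt hdc ?_ (mul_left_cancel₀ hQ₁ (hmul'.trans hmul.symm))
    exact (pow_left_inj₀ hpos.le hcd.le two_ne_zero).1
      (mul_left_cancel₀ (a := Q * (Q + 1)) (by positivity) (hsq'.trans hsq.symm))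
  · rintro ⟨rfl, rfl⟩
    exact ⟨hsq, hmul⟩

lemma exists_sum_prod_solution {Q : ℝ} (hQ : 2 < Q) :
    ∃ c d : ℝ, d < c ∧ c < 1 ∧ 0 < c + d ∧ Q * (Q + 1) * (c + d) ^ 2 = 8 ∧
      (Q + 1) * (c * d) = 3 - Q := by
  have hQQ : 0 < Q * (Q + 1) := by positivity
  obtain ⟨c, d, hdc, hadd, hmul⟩ :=
    exists_lt_add_eq_mul_eq (σ := √(8 / (Q * (Q + 1)))) (p := (3 - Q) / (Q + 1)) (by
      rw [sq_sqrt (by positivity), mul_div_assoc', div_lt_div_iff₀ (by positivity) hQQ]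
      nlinarith [mul_pos (mul_pos (by linarith : 0 < Q + 1) (by linarith : 0 < Q - 1))
        (sub_pos.2 hQ)])
  have hcd : 0 < c + d := hadd ▸ sqrt_pos.2 (by positivity)
  have hsq : Q * (Q + 1) * (c + d) ^ 2 = 8 := by
    rw [hadd, sq_sqrt (by positivity)]
    field_simp
  have hmul' : (Q + 1) * (c * d) = 3 - Q := by
    rw [hmul]
    field_simp
  refine ⟨c, d, hdc, ?_, hcd, hsq, hmul'⟩
  -- the second rational equation reads `(1 - c ^ 2) * X = c` with `X, c > 0`
  have h := ((rational_system_iff (by positivity) hcd.ne' (sub_pos.2 hdc).ne').2 ⟨hsq, hmul'⟩).2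
  have hX : 0 < 1 / (c + d) + (Q - 2) / (c - d) :=
    add_pos_of_pos_of_nonneg (by positivity) (div_nonneg (by linarith) (by linarith))
  have hc : 0 < c := by linarith
  have hc₁ : 0 < 1 - c ^ 2 := (pos_iff_pos_of_mul_pos (h.symm ▸ hc)).2 hX
  nlinarith

/-- For every integer `q > 2` there is exactly one pair `(x₁, x₂)` with
`0 < x₂ < x₁ < π/4` satisfying
`tan 2x₁ - (q-2) cot 2x₁ - cot(2(x₁-x₂)) - cot(2(x₁+x₂)) = 0` and
`tan 2x₂ - (q-2) cot 2x₂ - cot(2(x₂-x₁)) - cot(2(x₁+x₂)) = 0`. -/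
theorem stmt_16 (q : ℤ) (hq : 2 < q) :
    ∃! p : ℝ × ℝ, (0 < p.2 ∧ p.2 < p.1 ∧ p.1 < π / 4) ∧
      Real.tan (2 * p.1) - ((q : ℝ) - 2) * Real.cot (2 * p.1) -
        Real.cot (2 * (p.1 - p.2)) - Real.cot (2 * (p.1 + p.2)) = 0 ∧
      Real.tan (2 * p.2) - ((q : ℝ) - 2) * Real.cot (2 * p.2) -
        Real.cot (2 * (p.2 - p.1)) - Real.cot (2 * (p.1 + p.2)) = 0 := by
  have hQ : (2 : ℝ) < q := by exact_mod_cast hq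
  obtain ⟨c, d, hdc, hc₁, hcd, hsq, hmul⟩ := exists_sum_prod_solution hQ
  have hsys {x₁ x₂ : ℝ} (h₀ : 0 < x₂) (h₂₁ : x₂ < x₁) (h₁ : x₁ < π / 4) :=
    system_iff_cos_eq (by linarith) h₀ h₂₁ h₁ hdc hcd hsq hmul
  have hu : 0 < arccos c := arccos_pos.2 hc₁
  have huv : arccos c < arccos d := arccos_lt_arccos (by linarith) hdc hc₁.le
  have hvu : arccos d < π - arccos c := by
    rw [← arccos_neg]
    exact arccos_lt_arccos (by linarith) (by linarith) (by linarith)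
  refine ⟨((arccos c + arccos d) / 4, (arccos d - arccos c) / 4),
    ⟨⟨by linarith, by linarith, by linarith⟩,
      (hsys (by linarith) (by linarith) (by linarith)).2 ⟨?_, ?_⟩⟩, ?_⟩
  · rw [show 2 * ((arccos c + arccos d) / 4 - (arccos d - arccos c) / 4) = arccos c by ring,
      cos_arccos (by linarith) hc₁.le]
  · rw [show 2 * ((arccos c + arccos d) / 4 + (arccos d - arccos c) / 4) = arccos d by ring,
      cos_arccos (by linarith) (by linarith)]
  · rintro ⟨x₁, x₂⟩ ⟨⟨h₀, h₂₁, h₁⟩, hE⟩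
    obtain ⟨hc, hd⟩ := (hsys h₀ h₂₁ h₁).1 hE
    have hu' : arccos c = 2 * (x₁ - x₂) := hc ▸ arccos_cos (by linarith) (by linarith)
    have hv' : arccos d = 2 * (x₁ + x₂) := hd ▸ arccos_cos (by linarith) (by linarith)
    ext <;> dsimp only <;> linarith
end

section
/- Let (x₁, x₂) be a pair of real numbers with x₁ − x₂ > 0, x₁ + x₂ > 0 and x₁ < π/4. Then the two equations cot(2(x₁−x₂)) + cot(2(x₁+x₂)) − tan 2x₁ = 0 and cot(2(x₂−x₁)) + cot(2(x₁+x₂)) − tan 2x₂ = 0 hold simultaneously if and only if (x₁, x₂) = ((1/2)·arctan √2, 0). -/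
open Real

theorem cot_sub_add_cot_add_eq_tan_iff {u v : ℝ} (hsin : sin u ≠ 0) (hcos : cos u ≠ 0)
    (hsub : sin (u - v) ≠ 0) (hadd : sin (u + v) ≠ 0) :
    cot (u - v) + cot (u + v) = tan u ↔ 2 * cos u ^ 2 = sin (u - v) * sin (u + v) := by
  rw [cot_add_cot hsub hadd, show u - v + (u + v) = 2 * u by ring, sin_two_mul,
    tan_eq_sin_div_cos, div_eq_div_iff (mul_ne_zero hsub hadd) hcos]
  constructor
  · intro h
    exact mul_left_cancel₀ hsin (by linear_combination h)
  · intro h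
    linear_combination sin u * h

theorem cot_sub_add_cot_add_eq_tan_iff_sin_eq_zero {u v : ℝ} (hcos : cos v ≠ 0)
    (hsub : 0 < sin (u - v)) (hadd : 0 < sin (u + v)) :
    cot (v - u) + cot (u + v) = tan v ↔ sin v = 0 := by
  have hsub' : sin (v - u) = -sin (u - v) := by rw [← sin_neg, neg_sub]
  have hsin_vu : sin (v - u) ≠ 0 := by rw [hsub']; exact neg_ne_zero.2 hsub.ne'
  have hpos : 0 < 2 * cos v ^ 2 + sin (u - v) * sin (u + v) := by positivity
  rw [cot_add_cot hsin_vu hadd.ne', show v - u + (u + v) = 2 * v by ring, sin_two_mul,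
    tan_eq_sin_div_cos, div_eq_div_iff (mul_ne_zero hsin_vu hadd.ne') hcos, hsub']
  constructor
  · intro h
    have : sin v * (2 * cos v ^ 2 + sin (u - v) * sin (u + v)) = 0 := by linear_combination h
    exact (mul_eq_zero.1 this).resolve_right hpos.ne'
  · intro h
    simp [h]

theorem two_mul_cos_sq_eq_sin_sq_iff {u : ℝ} (hu₀ : 0 < u) (hu : u < π / 2) :
    2 * cos u ^ 2 = sin u ^ 2 ↔ u = arctan √2 := by
  have hcos : 0 < cos u := cos_pos_of_mem_Ioo ⟨by linarith [pi_pos], hu⟩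
  have htan : 0 < tan u := tan_pos_of_pos_of_lt_pi_div_two hu₀ hu
  calc 2 * cos u ^ 2 = sin u ^ 2 ↔ tan u ^ 2 = 2 := by
        rw [tan_eq_sin_div_cos, div_pow, div_eq_iff (by positivity), eq_comm]
    _ ↔ tan u = √2 := by
        rw [eq_comm, ← sqrt_eq_iff_eq_sq zero_le_two htan.le, eq_comm]
    _ ↔ u = arctan √2 := by
        constructor
        · intro h; rw [← h, arctan_tan (by linarith [pi_pos]) hu]
        · intro h; rw [h, tan_arctan]

theorem cot_sub_add_cot_add_sub_tan_eq_zero_iff {u v : ℝ} (hvu : |v| < u) (hu : u < π / 2) :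
    (cot (u - v) + cot (u + v) - tan u = 0 ∧ cot (v - u) + cot (u + v) - tan v = 0) ↔
      (u = arctan √2 ∧ v = 0) := by
  obtain ⟨hv₁, hv₂⟩ := abs_lt.1 hvu
  have hpi := pi_pos
  have hsub : 0 < sin (u - v) := sin_pos_of_pos_of_lt_pi (by linarith) (by linarith)
  have hadd : 0 < sin (u + v) := sin_pos_of_pos_of_lt_pi (by linarith) (by linarith)
  have hsin : 0 < sin u := sin_pos_of_pos_of_lt_pi (by linarith) (by linarith)
  have hcos : 0 < cos u := cos_pos_of_mem_Ioo ⟨by linarith, hu⟩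
  have hcos' : 0 < cos v := cos_pos_of_mem_Ioo ⟨by linarith, by linarith⟩
  simp only [sub_eq_zero]
  rw [cot_sub_add_cot_add_eq_tan_iff hsin.ne' hcos.ne' hsub.ne' hadd.ne',
    cot_sub_add_cot_add_eq_tan_iff_sin_eq_zero hcos'.ne' hsub hadd,
    sin_eq_zero_iff_of_lt_of_lt (by linarith) (by linarith)]
  refine and_congr_left fun hv ↦ ?_
  rw [hv, sub_zero, add_zero, ← sq]
  exact two_mul_cos_sq_eq_sin_sq_iff (by linarith) hu

/-- For `(x₁, x₂)` with `x₁ - x₂ > 0`, `x₁ + x₂ > 0` and `x₁ < π/4`: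
`cot(2(x₁-x₂)) + cot(2(x₁+x₂)) - tan 2x₁ = 0` and
`cot(2(x₂-x₁)) + cot(2(x₁+x₂)) - tan 2x₂ = 0` hold simultaneously iff
`(x₁, x₂) = ((1/2) arctan √2, 0)`. -/
theorem stmt_17 (x₁ x₂ : ℝ) (h1 : 0 < x₁ - x₂) (h2 : 0 < x₁ + x₂) (h3 : x₁ < π / 4) :
    (Real.cot (2 * (x₁ - x₂)) + Real.cot (2 * (x₁ + x₂)) - Real.tan (2 * x₁) = 0 ∧
     Real.cot (2 * (x₂ - x₁)) + Real.cot (2 * (x₁ + x₂)) - Real.tan (2 * x₂) = 0) ↔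
    (x₁ = (1 / 2) * Real.arctan (Real.sqrt 2) ∧ x₂ = 0) := by
  rw [show 2 * (x₁ - x₂) = 2 * x₁ - 2 * x₂ by ring, show 2 * (x₂ - x₁) = 2 * x₂ - 2 * x₁ by ring,
    show 2 * (x₁ + x₂) = 2 * x₁ + 2 * x₂ by ring,
    cot_sub_add_cot_add_sub_tan_eq_zero_iff (abs_lt.2 ⟨by linarith, by linarith⟩) (by linarith)]
  constructor <;> rintro ⟨h, h'⟩ <;> constructor <;> linarith
end
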